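/- arXiv:quant-ph/9511002 — 8 statements merged into one kernel-verified Lean document; each statement's English description precedes it below -/
import Mathlib

section
/- Let H, K be finite-dimensional complex Hilbert spaces and S : H → K a map such that the assignment (φ,·)φ ↦ (Sφ,·)Sφ on rank-one operators extends to a linear map L(H) → L(K). If the range of S is not contained in a single ray of K, then there exists a map C : H → K, either linear or antilinear, with (Sφ,·)Sφ = (Cφ,·)Cφ for all φ ∈ H. -/
open scoped ComplexConjugate

/-- The rank-one operator `(e,·)e : f ↦ ⟪e, f⟫ e`. -/
noncomputable def rankOne {H : Type*} [NormedAddCommGroup H] [InnerProductSpace ℂ H]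
    (e : H) : H →ₗ[ℂ] H where
  toFun f := (inner ℂ e f : ℂ) • e
  map_add' x y := by simp [inner_add_right, add_smul]
  map_smul' c x := by simp [inner_smul_right, smul_smul]

/-- A positive operator: `⟪f, D f⟫ ≥ 0` (in particular real) for all `f`. -/
def IsPosOp {H : Type*} [NormedAddCommGroup H] [InnerProductSpace ℂ H]
    (D : H →ₗ[ℂ] H) : Prop :=
  ∀ f : H, 0 ≤ (inner ℂ f (D f) : ℂ).re ∧ (inner ℂ f (D f) : ℂ).im = 0

open Complex

local notation "⟪" x ", " y "⟫" => @inner ℂ _ _ x y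

section infra
variable {K : Type*} [NormedAddCommGroup K] [InnerProductSpace ℂ K]

/-- ketbra a b : f ↦ ⟪b,f⟫ • a -/
noncomputable def ketbra (a b : K) : K →ₗ[ℂ] K where
  toFun f := (inner ℂ b f : ℂ) • a
  map_add' x y := by simp [inner_add_right, add_smul]
  map_smul' c x := by simp [inner_smul_right, smul_smul]

@[simp] lemma ketbra_apply (a b f : K) : ketbra a b f = (⟪b, f⟫ : ℂ) • a := rfl

lemma inner_ketbra (a b f g : K) : ⟪f, ketbra a b g⟫ = ⟪b, g⟫ * ⟪f, a⟫ := by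
  simp [inner_smul_right]

lemma ketbra_add_left (a a' b : K) : ketbra (a + a') b = ketbra a b + ketbra a' b := by
  ext f; simp [smul_add]

lemma ketbra_add_right (a b b' : K) : ketbra a (b + b') = ketbra a b + ketbra a b' := by
  ext f; simp [inner_add_left, add_smul]

lemma ketbra_smul_left (c : ℂ) (a b : K) : ketbra (c • a) b = c • ketbra a b := by
  ext f; simp [smul_smul, mul_comm]

lemma ketbra_smul_right (c : ℂ) (a b : K) : ketbra a (c • b) = (conj c) • ketbra a b := by
  ext f; simp [inner_smul_left, smul_smul, mul_comm]

lemma ketbra_unit (z : ℂ) (hz : z * conj z = 1) (x : K) :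
    ketbra (z • x) (z • x) = ketbra x x := by
  rw [ketbra_smul_left, ketbra_smul_right, smul_smul, mul_comm z (conj z), mul_comm, hz, one_smul]

lemma eq_of_inner {T T' : K →ₗ[ℂ] K} (h : ∀ f g, ⟪f, T g⟫ = ⟪f, T' g⟫) : T = T' := by
  ext g
  exact ext_inner_left ℂ (fun v => h v g)

lemma zero_of_inner {T : K →ₗ[ℂ] K} (h : ∀ f g, ⟪f, T g⟫ = 0) : T = 0 := by
  apply eq_of_inner; simpa using h

/-- from v ∉ span u (incl. u = 0 case handled by v ≠ 0): get vector ⊥ u with nonzero inner with v -/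
lemma exists_dual {u v : K} (h : ∀ k : ℂ, v ≠ k • u) :
    ∃ f : K, ⟪u, f⟫ = 0 ∧ ⟪v, f⟫ ≠ 0 := by
  by_cases hu : u = 0
  · refine ⟨v, by simp [hu], ?_⟩
    have hv : v ≠ 0 := by intro h0; exact h 0 (by simp [h0])
    simpa [inner_self_eq_zero] using hv
  · have hnu : (⟪u, u⟫ : ℂ) ≠ 0 := inner_self_ne_zero.mpr hu
    set c : ℂ := ⟪u, v⟫ / ⟪u, u⟫ with hc
    have huf : ⟪u, v - c • u⟫ = 0 := by
      rw [inner_sub_right, inner_smul_right, hc, div_mul_cancel₀ _ hnu, sub_self]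
    refine ⟨v - c • u, huf, ?_⟩
    have hne : v - c • u ≠ 0 := fun h0 => h c (by rw [sub_eq_zero] at h0; exact h0)
    have hself : ⟪v - c • u, v - c • u⟫ ≠ 0 := by simpa [inner_self_eq_zero] using hne
    intro h0
    apply hself
    rw [inner_sub_left, inner_smul_left, h0, huf]
    ring

lemma span_swap {u v : K} (hu : u ≠ 0) (h : ∀ k : ℂ, v ≠ k • u) : ∀ k : ℂ, u ≠ k • v := by
  intro k hk
  by_cases hk0 : k = 0
  · exact hu (by simpa [hk0] using hk)
  · exact h k⁻¹ (by rw [hk, smul_smul, inv_mul_cancel₀ hk0, one_smul])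

lemma exists_dual_one {u v : K} (h : ∀ k : ℂ, u ≠ k • v) :
    ∃ f : K, ⟪u, f⟫ = 1 ∧ ⟪v, f⟫ = 0 := by
  obtain ⟨g, hg1, hg2⟩ := exists_dual h
  refine ⟨(⟪u, g⟫)⁻¹ • g, ?_, ?_⟩
  · rw [inner_smul_right, inv_mul_cancel₀ hg2]
  · rw [inner_smul_right, hg1, mul_zero]

end infra

section polar
variable {K : Type*} [NormedAddCommGroup K] [InnerProductSpace ℂ K]

/-- polarization on the subspace u^⊥ -/
lemma polar_perp {T : K →ₗ[ℂ] K} {u : K}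
    (h : ∀ f, ⟪u, f⟫ = 0 → ⟪f, T f⟫ = 0) :
    ∀ f g, ⟪u, f⟫ = 0 → ⟪u, g⟫ = 0 → ⟪f, T g⟫ = 0 := by
  intro f g hf hg
  have h1 := h (f + g) (by rw [inner_add_right, hf, hg, add_zero])
  have h2 := h (f + Complex.I • g)
    (by rw [inner_add_right, inner_smul_right, hf, hg, mul_zero, add_zero])
  have hff := h f hf
  have hgg := h g hg
  rw [map_add, inner_add_left, inner_add_right, inner_add_right, hff, hgg] at h1
  rw [map_add, map_smul, inner_add_left, inner_add_right, inner_add_right,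
    inner_smul_left, inner_smul_right, inner_smul_left, inner_smul_right,
    hff, hgg] at h2
  simp only [Complex.conj_I] at h2
  -- h1 : ⟪f,Tg⟫ + ⟪g,Tf⟫-ish = 0 ; h2 : with I factors
  have e1 : ⟪f, T g⟫ + ⟪g, T f⟫ = 0 := by linear_combination h1
  have e2 : Complex.I * ⟪f, T g⟫ - Complex.I * ⟪g, T f⟫ = 0 := by linear_combination h2
  have e3 : ⟪f, T g⟫ - ⟪g, T f⟫ = 0 := by
    linear_combination (-Complex.I) * e2 + (⟪f, T g⟫ - ⟪g, T f⟫) * Complex.I_sq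
  linear_combination (e1 + e3) / 2

/-- structure lemma, rank-one version -/
lemma struct_one {T : K →ₗ[ℂ] K} {u fu : K} (hfu : ⟪u, fu⟫ = 1)
    (hT : ∀ f g, ⟪u, f⟫ = 0 ∨ ⟪u, g⟫ = 0 → ⟪f, T g⟫ = 0) :
    T = ⟪fu, T fu⟫ • ketbra u u := by
  have hfu' : ⟪fu, u⟫ = 1 := by rw [← inner_conj_symm, hfu, map_one]
  apply eq_of_inner
  intro f g
  have hfd : ⟪u, f - ⟪u, f⟫ • fu⟫ = 0 := by
    rw [inner_sub_right, inner_smul_right, hfu, mul_one, sub_self]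
  have hgd : ⟪u, g - ⟪u, g⟫ • fu⟫ = 0 := by
    rw [inner_sub_right, inner_smul_right, hfu, mul_one, sub_self]
  have hf : f = ⟪u, f⟫ • fu + (f - ⟪u, f⟫ • fu) := by abel
  have hg : g = ⟪u, g⟫ • fu + (g - ⟪u, g⟫ • fu) := by abel
  calc ⟪f, T g⟫ = ⟪⟪u, f⟫ • fu + (f - ⟪u, f⟫ • fu), T (⟪u, g⟫ • fu + (g - ⟪u, g⟫ • fu))⟫ := by
        rw [← hf, ← hg]
    _ = conj ⟪u, f⟫ * ⟪u, g⟫ * ⟪fu, T fu⟫ := by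
        rw [map_add, map_smul, inner_add_left, inner_add_right, inner_add_right,
          inner_smul_left, inner_smul_right, inner_smul_left, inner_smul_right]
        rw [hT _ _ (Or.inr hgd), hT _ _ (Or.inl hfd), hT _ _ (Or.inl hfd)]
        ring
    _ = ⟪f, (⟪fu, T fu⟫ • ketbra u u) g⟫ := by
        rw [LinearMap.smul_apply, inner_smul_right, inner_ketbra, inner_conj_symm]
        ring

/-- structure lemma: two-dimensional support -/
lemma struct_two {T : K →ₗ[ℂ] K} {u v fu fv : K}
    (hfu1 : ⟪u, fu⟫ = 1) (hfu2 : ⟪v, fu⟫ = 0) (hfv1 : ⟪v, fv⟫ = 1) (hfv2 : ⟪u, fv⟫ = 0)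
    (hU : ∀ f g, ⟪u, f⟫ = 0 → ⟪u, g⟫ = 0 → ⟪f, T g⟫ = 0)
    (hV : ∀ f g, ⟪v, f⟫ = 0 → ⟪v, g⟫ = 0 → ⟪f, T g⟫ = 0) :
    T = ⟪fu, T fv⟫ • ketbra u v + ⟪fv, T fu⟫ • ketbra v u := by
  set a := ⟪fu, T fv⟫
  set b := ⟪fv, T fu⟫
  apply eq_of_inner
  intro f g
  have hfu1' : ⟪fu, u⟫ = 1 := by rw [← inner_conj_symm, hfu1, map_one]
  have hfv1' : ⟪fv, v⟫ = 1 := by rw [← inner_conj_symm, hfv1, map_one]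
  have hfu2' : ⟪fu, v⟫ = 0 := by rw [← inner_conj_symm, hfu2, map_zero]
  have hfv2' : ⟪fv, u⟫ = 0 := by rw [← inner_conj_symm, hfv2, map_zero]
  -- step1 : for g' ⊥ u, ⟪fu, T g'⟫ = a * ⟪v, g'⟫
  have step1 : ∀ g', ⟪u, g'⟫ = 0 → ⟪fu, T g'⟫ = a * ⟪v, g'⟫ := by
    intro g' hg'
    have hdec : g' = ⟪v, g'⟫ • fv + (g' - ⟪v, g'⟫ • fv) := by abel
    have h2 : ⟪v, g' - ⟪v, g'⟫ • fv⟫ = 0 := by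
      rw [inner_sub_right, inner_smul_right, hfv1, mul_one, sub_self]
    calc ⟪fu, T g'⟫ = ⟪fu, T (⟪v, g'⟫ • fv + (g' - ⟪v, g'⟫ • fv))⟫ := by rw [← hdec]
      _ = ⟪v, g'⟫ * ⟪fu, T fv⟫ + ⟪fu, T (g' - ⟪v, g'⟫ • fv)⟫ := by
          rw [map_add, map_smul, inner_add_right, inner_smul_right]
      _ = a * ⟪v, g'⟫ := by rw [hV fu _ hfu2 h2]; ring
  have step2 : ∀ f', ⟪u, f'⟫ = 0 → ⟪f', T fu⟫ = b * ⟪f', v⟫ := by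
    intro f' hf'
    have hdec : f' = ⟪v, f'⟫ • fv + (f' - ⟪v, f'⟫ • fv) := by abel
    have h2 : ⟪v, f' - ⟪v, f'⟫ • fv⟫ = 0 := by
      rw [inner_sub_right, inner_smul_right, hfv1, mul_one, sub_self]
    calc ⟪f', T fu⟫ = ⟪⟪v, f'⟫ • fv + (f' - ⟪v, f'⟫ • fv), T fu⟫ := by rw [← hdec]
      _ = conj ⟪v, f'⟫ * ⟪fv, T fu⟫ + ⟪f' - ⟪v, f'⟫ • fv, T fu⟫ := by
          rw [inner_add_left, inner_smul_left]
      _ = b * ⟪f', v⟫ := by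
          rw [hV _ fu h2 hfu2, ← inner_conj_symm f' v]
          ring
  have hfdu : ⟪u, f - ⟪u, f⟫ • fu⟫ = 0 := by
    rw [inner_sub_right, inner_smul_right, hfu1, mul_one, sub_self]
  have hgdu : ⟪u, g - ⟪u, g⟫ • fu⟫ = 0 := by
    rw [inner_sub_right, inner_smul_right, hfu1, mul_one, sub_self]
  have hf : f = ⟪u, f⟫ • fu + (f - ⟪u, f⟫ • fu) := by abel
  have hg : g = ⟪u, g⟫ • fu + (g - ⟪u, g⟫ • fu) := by abel
  have main : ⟪f, T g⟫ =
      conj ⟪u, f⟫ * ⟪u, g⟫ * ⟪fu, T fu⟫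
      + conj ⟪u, f⟫ * ⟪fu, T (g - ⟪u, g⟫ • fu)⟫
      + ⟪u, g⟫ * ⟪f - ⟪u, f⟫ • fu, T fu⟫
      + ⟪f - ⟪u, f⟫ • fu, T (g - ⟪u, g⟫ • fu)⟫ := by
    conv_lhs => rw [hf, hg]
    rw [map_add, map_smul, inner_add_left, inner_add_right, inner_add_right,
      inner_smul_left, inner_smul_right, inner_smul_left, inner_smul_right]
    ring
  rw [main, hV fu fu hfu2 hfu2, step1 _ hgdu, step2 _ hfdu, hU _ _ hfdu hgdu]
  have expand : ⟪v, g - ⟪u, g⟫ • fu⟫ = ⟪v, g⟫ := by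
    rw [inner_sub_right, inner_smul_right, hfu2, mul_zero, sub_zero]
  have expand2 : ⟪f - ⟪u, f⟫ • fu, v⟫ = ⟪f, v⟫ := by
    rw [inner_sub_left, inner_smul_left, hfu2', mul_zero, sub_zero]
  rw [expand, expand2]
  simp only [LinearMap.add_apply, LinearMap.smul_apply, inner_add_right,
    inner_smul_right, inner_ketbra]
  rw [← inner_conj_symm f u, ← inner_conj_symm f v]
  ring

end polar

lemma real_L1 {A b : ℝ} (hA : 0 ≤ A) (h : ∀ t : ℝ, 0 ≤ A * t ^ 2 + b * t) : b = 0 := by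
  by_contra hb
  have h1 := h (-b / (A + 1))
  have hA1 : (0:ℝ) < A + 1 := by linarith
  have hb2 : 0 < b ^ 2 := by positivity
  have h2 : 0 ≤ (A * (-b / (A + 1)) ^ 2 + b * (-b / (A + 1))) * (A + 1) ^ 2 :=
    mul_nonneg h1 (by positivity)
  have h3 : (A * (-b / (A + 1)) ^ 2 + b * (-b / (A + 1))) * (A + 1) ^ 2
      = A * b ^ 2 - b ^ 2 * (A + 1) := by
    field_simp
    ring
  rw [h3] at h2
  nlinarith

lemma real_L2 {C b : ℝ} (h : ∀ t : ℝ, 0 ≤ b * t + C) : b = 0 := by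
  by_contra hb
  have h1 := h (-(C + 1) / b)
  rw [mul_div_assoc', mul_comm, mul_div_assoc, div_self hb, mul_one] at h1
  linarith

lemma unit_cases {m n : ℂ} (h1 : Complex.normSq (m + n) = 1) (h2 : Complex.normSq (m - n) = 1)
    (h3 : Complex.normSq ((1 + Complex.I) * m + (1 - Complex.I) * n) = 2) :
    (n = 0 ∧ m * conj m = 1) ∨ (m = 0 ∧ n * conj n = 1) := by
  obtain ⟨a, b⟩ := m
  obtain ⟨c, d⟩ := n
  simp only [Complex.normSq_apply, Complex.add_re, Complex.add_im, Complex.sub_re,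
    Complex.sub_im, Complex.mul_re, Complex.mul_im, Complex.one_re, Complex.one_im,
    Complex.I_re, Complex.I_im] at h1 h2 h3
  have hac : a * c + b * d = 0 := by nlinarith [h1, h2]
  have had : a * d - b * c = 0 := by nlinarith [h1, h2, h3]
  have key : (c = 0 ∧ d = 0) ∨ (a = 0 ∧ b = 0) := by
    by_cases hcd : c ^ 2 + d ^ 2 = 0
    · left
      constructor <;> nlinarith [sq_nonneg c, sq_nonneg d]
    · right
      have ha : a * (c ^ 2 + d ^ 2) = 0 := by linear_combination c * hac + d * had
      have hb : b * (c ^ 2 + d ^ 2) = 0 := by linear_combination d * hac - c * had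
      exact ⟨by
        rcases mul_eq_zero.mp ha with h | h
        · exact h
        · exact absurd h hcd, by
        rcases mul_eq_zero.mp hb with h | h
        · exact h
        · exact absurd h hcd⟩
  rcases key with ⟨hc, hd⟩ | ⟨ha, hb⟩
  · left
    constructor
    · simp [Complex.ext_iff, hc, hd]
    · have : Complex.normSq ⟨a, b⟩ = 1 := by
        simp only [Complex.normSq_apply]
        subst hc hd
        nlinarith [h1]
      rw [Complex.mul_conj, this, Complex.ofReal_one]
  · right
    constructor
    · simp [Complex.ext_iff, ha, hb]
    · have : Complex.normSq ⟨c, d⟩ = 1 := by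
        simp only [Complex.normSq_apply]
        subst ha hb
        nlinarith [h1]
      rw [Complex.mul_conj, this, Complex.ofReal_one]

section core
variable {K : Type*} [NormedAddCommGroup K] [InnerProductSpace ℂ K]
variable {u v : K} {M N : K →ₗ[ℂ] K} {Wf : ℂ → K}

lemma happ (hE : ∀ c : ℂ, ketbra (Wf c) (Wf c)
      = ketbra u u + (conj c * c) • ketbra v v + c • M + (conj c) • N) :
    ∀ (c : ℂ) (f g : K), ⟪Wf c, g⟫ * ⟪f, Wf c⟫
      = ⟪u, g⟫ * ⟪f, u⟫ + (conj c * c) * (⟪v, g⟫ * ⟪f, v⟫)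
        + c * ⟪f, M g⟫ + conj c * ⟪f, N g⟫ := by
  intro c f g
  have h := congrArg (fun T : K →ₗ[ℂ] K => ⟪f, T g⟫) (hE c)
  simpa [LinearMap.add_apply, LinearMap.smul_apply, inner_add_right,
    inner_smul_right, inner_ketbra] using h

lemma core_perp_u (hE : ∀ c : ℂ, ketbra (Wf c) (Wf c)
      = ketbra u u + (conj c * c) • ketbra v v + c • M + (conj c) • N) :
    ∀ f, ⟪u, f⟫ = 0 → ⟪f, M f⟫ = 0 ∧ ⟪f, N f⟫ = 0 := by
  intro f hf
  have hfu : ⟪f, u⟫ = 0 := by rw [← inner_conj_symm f u, hf, map_zero]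
  set m := ⟪f, M f⟫ with hm
  set n := ⟪f, N f⟫ with hn
  have hc : ∀ c : ℂ, ((Complex.normSq ⟪Wf c, f⟫ : ℝ) : ℂ)
      = (conj c * c) * ((Complex.normSq ⟪v, f⟫ : ℝ) : ℂ) + c * m + conj c * n := by
    intro c
    have h := happ hE c f f
    rw [hf, hfu, ← inner_conj_symm f (Wf c), Complex.mul_conj,
      ← inner_conj_symm f v, Complex.mul_conj] at h
    rw [h]; ring
  have hsum : m + n = 0 := by
    set r : ℝ := Complex.normSq ⟪Wf 1, f⟫ - Complex.normSq ⟪v, f⟫ with hr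
    have hr1 : m + n = (r : ℂ) := by
      have h := hc 1
      rw [map_one] at h
      push_cast [hr]
      linear_combination -h
    have hreal : ∀ t : ℝ, 0 ≤ Complex.normSq ⟪v, f⟫ * t ^ 2 + r * t := by
      intro t
      have h := hc (t : ℂ)
      rw [Complex.conj_ofReal] at h
      have h2 : ((Complex.normSq ⟪Wf (t:ℂ), f⟫ : ℝ) : ℂ)
          = ((Complex.normSq ⟪v, f⟫ * t ^ 2 + r * t : ℝ) : ℂ) := by
        push_cast
        linear_combination h + (t : ℂ) * hr1
      rw [← Complex.ofReal_inj.mp h2]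
      exact Complex.normSq_nonneg _
    have h0 := real_L1 (Complex.normSq_nonneg _) hreal
    rw [hr1, h0, Complex.ofReal_zero]
  have hdiff : Complex.I * (m - n) = 0 := by
    set s : ℝ := Complex.normSq ⟪Wf Complex.I, f⟫ - Complex.normSq ⟪v, f⟫ with hs
    have hs1 : Complex.I * (m - n) = (s : ℂ) := by
      have h := hc Complex.I
      rw [Complex.conj_I] at h
      push_cast [hs]
      linear_combination -h + ((Complex.normSq ⟪v, f⟫ : ℝ) : ℂ) * Complex.I_sq
    have hreal : ∀ t : ℝ, 0 ≤ Complex.normSq ⟪v, f⟫ * t ^ 2 + s * t := by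
      intro t
      have h := hc (Complex.I * (t : ℂ))
      rw [map_mul, Complex.conj_I, Complex.conj_ofReal] at h
      have h2 : ((Complex.normSq ⟪Wf (Complex.I * t), f⟫ : ℝ) : ℂ)
          = ((Complex.normSq ⟪v, f⟫ * t ^ 2 + s * t : ℝ) : ℂ) := by
        push_cast
        linear_combination h + (t : ℂ) * hs1
          - ((t:ℂ)^2 * ((Complex.normSq ⟪v, f⟫ : ℝ) : ℂ)) * Complex.I_sq
      rw [← Complex.ofReal_inj.mp h2]
      exact Complex.normSq_nonneg _
    have h0 := real_L1 (Complex.normSq_nonneg _) hreal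
    rw [hs1, h0, Complex.ofReal_zero]
  have hmn : m - n = 0 := by
    rcases mul_eq_zero.mp hdiff with h | h
    · exact absurd h Complex.I_ne_zero
    · exact h
  constructor
  · linear_combination (hsum + hmn) / 2
  · linear_combination (hsum - hmn) / 2

lemma core_perp_v (hE : ∀ c : ℂ, ketbra (Wf c) (Wf c)
      = ketbra u u + (conj c * c) • ketbra v v + c • M + (conj c) • N) :
    ∀ f, ⟪v, f⟫ = 0 → ⟪f, M f⟫ = 0 ∧ ⟪f, N f⟫ = 0 := by
  intro f hf
  have hfv : ⟪f, v⟫ = 0 := by rw [← inner_conj_symm f v, hf, map_zero]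
  set m := ⟪f, M f⟫ with hm
  set n := ⟪f, N f⟫ with hn
  have hc : ∀ c : ℂ, ((Complex.normSq ⟪Wf c, f⟫ : ℝ) : ℂ)
      = ((Complex.normSq ⟪u, f⟫ : ℝ) : ℂ) + c * m + conj c * n := by
    intro c
    have h := happ hE c f f
    rw [hf, hfv, ← inner_conj_symm f (Wf c), Complex.mul_conj,
      ← inner_conj_symm f u, Complex.mul_conj] at h
    rw [h]; ring
  have hsum : m + n = 0 := by
    set r : ℝ := Complex.normSq ⟪Wf 1, f⟫ - Complex.normSq ⟪u, f⟫ with hr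
    have hr1 : m + n = (r : ℂ) := by
      have h := hc 1
      rw [map_one] at h
      push_cast [hr]
      linear_combination -h
    have hreal : ∀ t : ℝ, 0 ≤ r * t + Complex.normSq ⟪u, f⟫ := by
      intro t
      have h := hc (t : ℂ)
      rw [Complex.conj_ofReal] at h
      have h2 : ((Complex.normSq ⟪Wf (t:ℂ), f⟫ : ℝ) : ℂ)
          = ((r * t + Complex.normSq ⟪u, f⟫ : ℝ) : ℂ) := by
        push_cast
        linear_combination h + (t : ℂ) * hr1
      rw [← Complex.ofReal_inj.mp h2]
      exact Complex.normSq_nonneg _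
    have h0 := real_L2 hreal
    rw [hr1, h0, Complex.ofReal_zero]
  have hdiff : Complex.I * (m - n) = 0 := by
    set s : ℝ := Complex.normSq ⟪Wf Complex.I, f⟫ - Complex.normSq ⟪u, f⟫ with hs
    have hs1 : Complex.I * (m - n) = (s : ℂ) := by
      have h := hc Complex.I
      rw [Complex.conj_I] at h
      push_cast [hs]
      linear_combination -h
    have hreal : ∀ t : ℝ, 0 ≤ s * t + Complex.normSq ⟪u, f⟫ := by
      intro t
      have h := hc (Complex.I * (t : ℂ))
      rw [map_mul, Complex.conj_I, Complex.conj_ofReal] at h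
      have h2 : ((Complex.normSq ⟪Wf (Complex.I * t), f⟫ : ℝ) : ℂ)
          = ((s * t + Complex.normSq ⟪u, f⟫ : ℝ) : ℂ) := by
        push_cast
        linear_combination h + (t : ℂ) * hs1
      rw [← Complex.ofReal_inj.mp h2]
      exact Complex.normSq_nonneg _
    have h0 := real_L2 hreal
    rw [hs1, h0, Complex.ofReal_zero]
  have hmn : m - n = 0 := by
    rcases mul_eq_zero.mp hdiff with h | h
    · exact absurd h Complex.I_ne_zero
    · exact h
  constructor
  · linear_combination (hsum + hmn) / 2
  · linear_combination (hsum - hmn) / 2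

lemma core_zero (hE : ∀ c : ℂ, ketbra (Wf c) (Wf c)
      = ketbra u u + (conj c * c) • ketbra v v + c • M + (conj c) • N)
    (hv : v = 0) : N = 0 ∧ M = 0 := by
  have h := core_perp_v hE
  have h' : ∀ f, ⟪f, M f⟫ = 0 ∧ ⟪f, N f⟫ = 0 := fun f => h f (by rw [hv, inner_zero_left])
  constructor
  · exact (inner_map_self_eq_zero N).mp (fun x => by
      rw [← inner_conj_symm (N x) x, (h' x).2, map_zero])
  · exact (inner_map_self_eq_zero M).mp (fun x => by
      rw [← inner_conj_symm (M x) x, (h' x).1, map_zero])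

lemma core_deg (hE : ∀ c : ℂ, ketbra (Wf c) (Wf c)
      = ketbra u u + (conj c * c) • ketbra v v + c • M + (conj c) • N)
    (hdep : ∃ k : ℂ, v = k • u) : ∃ a b : ℂ, N = a • ketbra u u ∧ M = b • ketbra u u := by
  obtain ⟨k, hk⟩ := hdep
  have hperp := core_perp_u hE
  -- Wf c is orthogonal to u^⊥
  have hW0 : ∀ (c : ℂ) f, ⟪u, f⟫ = 0 → ⟪f, Wf c⟫ = 0 := by
    intro c f hf
    have hfu : ⟪f, u⟫ = 0 := by rw [← inner_conj_symm f u, hf, map_zero]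
    have hfv : ⟪v, f⟫ = 0 := by rw [hk, inner_smul_left, hf, mul_zero]
    have hfv' : ⟪f, v⟫ = 0 := by rw [← inner_conj_symm f v, hfv, map_zero]
    have h := happ hE c f f
    rw [hf, hfu, hfv, hfv', (hperp f hf).1, (hperp f hf).2,
      ← inner_conj_symm f (Wf c), Complex.mul_conj] at h
    have h0c : ((Complex.normSq ⟪Wf c, f⟫ : ℝ) : ℂ) = 0 := h.trans (by ring)
    have h0 : Complex.normSq ⟪Wf c, f⟫ = 0 := by exact_mod_cast h0c
    have h1 := Complex.normSq_eq_zero.mp h0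
    rw [← inner_conj_symm f (Wf c), h1, map_zero]
  have hMN : ∀ f g, ⟪u, f⟫ = 0 ∨ ⟪u, g⟫ = 0 → ⟪f, N g⟫ = 0 ∧ ⟪f, M g⟫ = 0 := by
    intro f g hfg
    have key : ∀ c : ℂ, c * ⟪f, M g⟫ + conj c * ⟪f, N g⟫ = 0 := by
      intro c
      have h := happ hE c f g
      have hz : ⟪Wf c, g⟫ * ⟪f, Wf c⟫ = 0 := by
        rcases hfg with hf | hg
        · rw [hW0 c f hf, mul_zero]
        · have : ⟪g, Wf c⟫ = 0 := hW0 c g hg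
          rw [← inner_conj_symm (Wf c) g, this, map_zero, zero_mul]
      have hz2 : ⟪u, g⟫ * ⟪f, u⟫ = 0 := by
        rcases hfg with hf | hg
        · rw [← inner_conj_symm f u, hf, map_zero, mul_zero]
        · rw [hg, zero_mul]
      have hz3 : ⟪v, g⟫ * ⟪f, v⟫ = 0 := by
        rcases hfg with hf | hg
        · have : ⟪f, v⟫ = 0 := by
            rw [hk, inner_smul_right, ← inner_conj_symm f u, hf, map_zero, mul_zero]
          rw [this, mul_zero]
        · have : ⟪v, g⟫ = 0 := by rw [hk, inner_smul_left, hg, mul_zero]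
          rw [this, zero_mul]
      rw [hz, hz2, hz3, mul_zero] at h
      linear_combination -h
    have k1 := key 1
    have k2 := key Complex.I
    rw [map_one, one_mul, one_mul] at k1
    rw [Complex.conj_I] at k2
    have hd : ⟪f, M g⟫ - ⟪f, N g⟫ = 0 := by
      linear_combination -Complex.I * k2 + (⟪f, M g⟫ - ⟪f, N g⟫) * Complex.I_sq
    constructor
    · linear_combination (k1 - hd) / 2
    · linear_combination (k1 + hd) / 2
  by_cases hu : u = 0
  · refine ⟨0, 0, ?_, ?_⟩ <;>
    · rw [zero_smul]
      exact zero_of_inner (fun f g => (by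
        have := hMN f g (Or.inl (by rw [hu, inner_zero_left]))
        first
        | exact this.1
        | exact this.2))
  · have hns : (⟪u, u⟫ : ℂ) ≠ 0 := inner_self_ne_zero.mpr hu
    set fu : K := (⟪u, u⟫)⁻¹ • u with hfu
    have hfu1 : ⟪u, fu⟫ = 1 := by
      rw [hfu, inner_smul_right, inv_mul_cancel₀ hns]
    exact ⟨⟪fu, N fu⟫, ⟪fu, M fu⟫,
      struct_one hfu1 (fun f g h => (hMN f g h).1),
      struct_one hfu1 (fun f g h => (hMN f g h).2)⟩

lemma core_dichotomy (hE : ∀ c : ℂ, ketbra (Wf c) (Wf c)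
      = ketbra u u + (conj c * c) • ketbra v v + c • M + (conj c) • N)
    (hu : u ≠ 0) (hv : ∀ k : ℂ, v ≠ k • u) :
    (∃ p : ℂ, p * conj p = 1 ∧ N = p • ketbra u v ∧ M = (conj p) • ketbra v u) ∨
    (∃ q : ℂ, q * conj q = 1 ∧ N = q • ketbra v u ∧ M = (conj q) • ketbra u v) := by
  have hu' : ∀ k : ℂ, u ≠ k • v := span_swap hu hv
  obtain ⟨fu, hfu1, hfu2⟩ := exists_dual_one hu'
  obtain ⟨fv, hfv1, hfv2⟩ := exists_dual_one hv
  have perpU := core_perp_u hE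
  have perpV := core_perp_v hE
  have hNU := polar_perp (T := N) (u := u) (fun f hf => (perpU f hf).2)
  have hNV := polar_perp (T := N) (u := v) (fun f hf => (perpV f hf).2)
  have hMU := polar_perp (T := M) (u := u) (fun f hf => (perpU f hf).1)
  have hMV := polar_perp (T := M) (u := v) (fun f hf => (perpV f hf).1)
  set n₁ := ⟪fu, N fv⟫ with hn₁
  set n₂ := ⟪fv, N fu⟫ with hn₂
  set m₁ := ⟪fu, M fv⟫ with hm₁
  set m₂ := ⟪fv, M fu⟫ with hm₂
  have structN : N = n₁ • ketbra u v + n₂ • ketbra v u :=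
    struct_two hfu1 hfu2 hfv1 hfv2 hNU hNV
  have structM : M = m₁ • ketbra u v + m₂ • ketbra v u :=
    struct_two hfu1 hfu2 hfv1 hfv2 hMU hMV
  have hfu1' : ⟪fu, u⟫ = 1 := by rw [← inner_conj_symm fu u, hfu1, map_one]
  have hfv1' : ⟪fv, v⟫ = 1 := by rw [← inner_conj_symm fv v, hfv1, map_one]
  have hfu2' : ⟪fu, v⟫ = 0 := by rw [← inner_conj_symm fu v, hfu2, map_zero]
  have hfv2' : ⟪fv, u⟫ = 0 := by rw [← inner_conj_symm fv u, hfv2, map_zero]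
  -- the four tests
  have t1 : ∀ c : ℂ, ⟪Wf c, fu⟫ * ⟪fu, Wf c⟫ = 1 := by
    intro c
    have h := happ hE c fu fu
    rw [hfu1, hfu1', hfu2, hfu2', (perpV fu hfu2).1, (perpV fu hfu2).2] at h
    rw [h]; ring
  have t2 : ∀ c : ℂ, ⟪Wf c, fv⟫ * ⟪fv, Wf c⟫ = conj c * c := by
    intro c
    have h := happ hE c fv fv
    rw [hfv1, hfv1', hfv2, hfv2', (perpU fv hfv2).1, (perpU fv hfv2).2] at h
    rw [h]; ring
  have t3 : ∀ c : ℂ, ⟪Wf c, fv⟫ * ⟪fu, Wf c⟫ = c * m₁ + conj c * n₁ := by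
    intro c
    have h := happ hE c fu fv
    rw [hfv1, hfu1', hfv2, hfu2'] at h
    rw [h, hn₁, hm₁]; ring
  have t4 : ∀ c : ℂ, ⟪Wf c, fu⟫ * ⟪fv, Wf c⟫ = c * m₂ + conj c * n₂ := by
    intro c
    have h := happ hE c fv fu
    rw [hfu1, hfv1', hfu2, hfv2'] at h
    rw [h, hn₂, hm₂]; ring
  -- conjugation relation
  have hconj : ∀ c : ℂ, c * m₂ + conj c * n₂ = conj (c * m₁ + conj c * n₁) := by
    intro c
    rw [← t3 c, ← t4 c, map_mul, inner_conj_symm, inner_conj_symm]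
    ring
  have hm₂n₁ : m₂ = conj n₁ ∧ n₂ = conj m₁ := by
    have h1 := hconj 1
    have h2 := hconj Complex.I
    simp only [map_one, one_mul, map_add, map_mul, Complex.conj_conj] at h1
    simp only [map_add, map_mul, map_neg, Complex.conj_I, Complex.conj_conj, neg_neg] at h2
    have hd : m₂ - n₂ + conj m₁ - conj n₁ = 0 := by
      linear_combination -Complex.I * h2 + (m₂ - n₂ + conj m₁ - conj n₁) * Complex.I_sq
    constructor
    · linear_combination (h1 + hd) / 2
    · linear_combination (h1 - hd) / 2
  -- modulus relation
  have hmod : ∀ c : ℂ, (c * m₁ + conj c * n₁) * conj (c * m₁ + conj c * n₁) = conj c * c := by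
    intro c
    rw [← hconj c, ← t3 c, ← t4 c]
    calc ⟪Wf c, fv⟫ * ⟪fu, Wf c⟫ * (⟪Wf c, fu⟫ * ⟪fv, Wf c⟫)
        = (⟪Wf c, fv⟫ * ⟪fv, Wf c⟫) * (⟪Wf c, fu⟫ * ⟪fu, Wf c⟫) := by ring
      _ = conj c * c := by rw [t1 c, t2 c, mul_one]
  -- extract normSq equations
  have hnormSq : ∀ c : ℂ, Complex.normSq (c * m₁ + conj c * n₁) = Complex.normSq c := by
    intro c
    have h := hmod c
    rw [Complex.mul_conj] at h
    have h2 : (conj c * c : ℂ) = (Complex.normSq c : ℝ) := by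
      rw [mul_comm, Complex.mul_conj]
    rw [h2] at h
    exact_mod_cast h
  have e1 : Complex.normSq (m₁ + n₁) = 1 := by
    have h := hnormSq 1
    rw [map_one, one_mul, one_mul] at h
    simpa using h
  have e2 : Complex.normSq (m₁ - n₁) = 1 := by
    have h := hnormSq Complex.I
    rw [Complex.conj_I] at h
    have : Complex.I * m₁ + -Complex.I * n₁ = Complex.I * (m₁ - n₁) := by ring
    rw [this, Complex.normSq_mul, Complex.normSq_I, one_mul] at h
    simpa using h
  have e3 : Complex.normSq ((1 + Complex.I) * m₁ + (1 - Complex.I) * n₁) = 2 := by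
    have h := hnormSq (1 + Complex.I)
    have hcc : conj (1 + Complex.I) = 1 - Complex.I := by
      rw [map_add, map_one, Complex.conj_I]; ring
    rw [hcc] at h
    rw [h]
    norm_num [Complex.normSq_apply]
  rcases unit_cases e1 e2 e3 with ⟨hn0, hm1⟩ | ⟨hm0, hn1⟩
  · -- n₁ = 0 : antiunitary case
    right
    refine ⟨conj m₁, ?_, ?_, ?_⟩
    · rw [Complex.conj_conj]; rw [mul_comm] at hm1; exact hm1
    · rw [structN, hm₂n₁.2, hn0, zero_smul, zero_add]
    · rw [structM, hm₂n₁.1, hn0, map_zero, zero_smul, add_zero, Complex.conj_conj]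
  · -- m₁ = 0 : unitary case
    left
    refine ⟨n₁, ?_, ?_, ?_⟩
    · exact hn1
    · rw [structN, hm₂n₁.2, hm0, map_zero, zero_smul, add_zero]
    · rw [structM, hm₂n₁.1, hm0, zero_smul, zero_add]

end core

section blevel
variable {H K : Type*} [NormedAddCommGroup H] [InnerProductSpace ℂ H]
  [NormedAddCommGroup K] [InnerProductSpace ℂ K]

lemma ketbra_expand (φ ψ : H) (c : ℂ) :
    ketbra (φ + c • ψ) (φ + c • ψ)
      = ketbra φ φ + (conj c * c) • ketbra ψ ψ + c • ketbra ψ φ + conj c • ketbra φ ψ := by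
  ext f
  simp only [LinearMap.add_apply, LinearMap.smul_apply, ketbra_apply,
    inner_add_left, inner_smul_left, smul_add, add_smul, smul_smul]
  module

variable (W : (H →ₗ[ℂ] H) →ₗ[ℂ] (K →ₗ[ℂ] K)) (S : H → K)

lemma hE_B (hW : ∀ φ : H, W (ketbra φ φ) = ketbra (S φ) (S φ)) (φ ψ : H) :
    ∀ c : ℂ, ketbra (S (φ + c • ψ)) (S (φ + c • ψ))
      = ketbra (S φ) (S φ) + (conj c * c) • ketbra (S ψ) (S ψ)
        + c • (W (ketbra ψ φ)) + conj c • (W (ketbra φ ψ)) := by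
  intro c
  rw [← hW, ← hW, ← hW, ketbra_expand, map_add, map_add, map_add, map_smul, map_smul, map_smul]

def Lt (φ ψ : H) : Prop :=
  ∃ p : ℂ, p * conj p = 1 ∧ W (ketbra φ ψ) = p • ketbra (S φ) (S ψ)
    ∧ W (ketbra ψ φ) = conj p • ketbra (S ψ) (S φ)

def At (φ ψ : H) : Prop :=
  ∃ q : ℂ, q * conj q = 1 ∧ W (ketbra φ ψ) = q • ketbra (S ψ) (S φ)
    ∧ W (ketbra ψ φ) = conj q • ketbra (S φ) (S ψ)

variable {W S}

lemma Lt_swap {φ ψ : H} (h : Lt W S φ ψ) : Lt W S ψ φ := by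
  obtain ⟨p, h1, h2, h3⟩ := h
  exact ⟨conj p, by rw [Complex.conj_conj]; linear_combination h1, h3,
    by rw [Complex.conj_conj]; exact h2⟩

lemma At_swap {φ ψ : H} (h : At W S φ ψ) : At W S ψ φ := by
  obtain ⟨q, h1, h2, h3⟩ := h
  exact ⟨conj q, by rw [Complex.conj_conj]; linear_combination h1, h3,
    by rw [Complex.conj_conj]; exact h2⟩

lemma dichotomyB (hW : ∀ φ : H, W (ketbra φ φ) = ketbra (S φ) (S φ)) (φ ψ : H)
    (hu : S φ ≠ 0) (hv : ∀ k : ℂ, S ψ ≠ k • S φ) : Lt W S φ ψ ∨ At W S φ ψ := by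
  rcases core_dichotomy (hE_B W S hW φ ψ) hu hv with ⟨p, h1, h2, h3⟩ | ⟨q, h1, h2, h3⟩
  · exact Or.inl ⟨p, h1, h2, h3⟩
  · exact Or.inr ⟨q, h1, h2, h3⟩

lemma zeroB (hW : ∀ φ : H, W (ketbra φ φ) = ketbra (S φ) (S φ)) (φ ψ : H)
    (hψ : S ψ = 0) : W (ketbra φ ψ) = 0 ∧ W (ketbra ψ φ) = 0 :=
  core_zero (hE_B W S hW φ ψ) hψ

lemma degB (hW : ∀ φ : H, W (ketbra φ φ) = ketbra (S φ) (S φ)) (φ ψ : H)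
    (hdep : ∃ k : ℂ, S ψ = k • S φ) :
    ∃ a b : ℂ, W (ketbra φ ψ) = a • ketbra (S φ) (S φ)
      ∧ W (ketbra ψ φ) = b • ketbra (S φ) (S φ) :=
  core_deg (hE_B W S hW φ ψ) hdep

lemma unit_ne_zero {p : ℂ} (hp : p * conj p = 1) : p ≠ 0 := by
  intro h0
  rw [h0, zero_mul] at hp
  exact zero_ne_one hp

lemma prop_a (hW : ∀ φ : H, W (ketbra φ φ) = ketbra (S φ) (S φ)) (φ ψ ψ' : H)
    (hu : S φ ≠ 0) (hψ : ∀ k : ℂ, S ψ ≠ k • S φ) (hψ' : ∀ k : ℂ, S ψ' ≠ k • S φ)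
    (hL : Lt W S φ ψ) (hA : At W S φ ψ') : False := by
  obtain ⟨p, hp, hpN, -⟩ := hL
  obtain ⟨q, hq, hqN, -⟩ := hA
  have hp0 : p ≠ 0 := unit_ne_zero hp
  have hq0 : q ≠ 0 := unit_ne_zero hq
  have hadd : W (ketbra φ (ψ + ψ'))
      = p • ketbra (S φ) (S ψ) + q • ketbra (S ψ') (S φ) := by
    rw [ketbra_add_right, map_add, hpN, hqN]
  obtain ⟨f, hf0, hfv⟩ := exists_dual hψ
  have e1 : W (ketbra φ (ψ + ψ')) f = (p * ⟪S ψ, f⟫) • S φ := by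
    rw [hadd]
    simp only [LinearMap.add_apply, LinearMap.smul_apply, ketbra_apply, hf0,
      zero_smul, smul_zero, add_zero, smul_smul]
  by_cases h : ∃ k : ℂ, S (ψ + ψ') = k • S φ
  · obtain ⟨a, b, haN, -⟩ := degB hW φ (ψ + ψ') h
    have e2 : W (ketbra φ (ψ + ψ')) f = 0 := by
      rw [haN]
      simp [hf0]
    rw [e2] at e1
    rcases smul_eq_zero.mp e1.symm with hc | hc
    · exact (mul_ne_zero hp0 hfv) hc
    · exact hu hc
  · push_neg at h
    rcases dichotomyB hW φ (ψ + ψ') hu h with ⟨r, hr, hrN, -⟩ | ⟨r, hr, hrN, -⟩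
    · -- L-type for the sum : test with g ⊥ S φ against vector S φ
      obtain ⟨g, hg0, hgv⟩ := exists_dual hψ'
      have hgf : ⟪g, S φ⟫ = 0 := by rw [← inner_conj_symm g (S φ), hg0, map_zero]
      have hgv' : ⟪g, S ψ'⟫ ≠ 0 := by
        intro hc
        exact hgv (by rw [← inner_conj_symm (S ψ') g, hc, map_zero])
      have e3 : ⟪g, W (ketbra φ (ψ + ψ')) (S φ)⟫ = q * ⟪S φ, S φ⟫ * ⟪g, S ψ'⟫ := by
        rw [hadd]
        simp only [LinearMap.add_apply, LinearMap.smul_apply, inner_add_right,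
          inner_smul_right, inner_ketbra, hgf]
        ring
      have e4 : ⟪g, W (ketbra φ (ψ + ψ')) (S φ)⟫ = 0 := by
        rw [hrN]
        simp only [LinearMap.smul_apply, inner_smul_right, inner_ketbra, hgf]
        ring
      rw [e4] at e3
      have : q * ⟪S φ, S φ⟫ * ⟪g, S ψ'⟫ ≠ 0 :=
        mul_ne_zero (mul_ne_zero hq0 (inner_self_ne_zero.mpr hu)) hgv'
      exact this e3.symm
    · have e2 : W (ketbra φ (ψ + ψ')) f = 0 := by
        rw [hrN]
        simp [hf0]
      rw [e2] at e1
      rcases smul_eq_zero.mp e1.symm with hc | hc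
      · exact (mul_ne_zero hp0 hfv) hc
      · exact hu hc

lemma prop_b (hW : ∀ φ : H, W (ketbra φ φ) = ketbra (S φ) (S φ)) (φ φ' ψ : H)
    (hu : S φ ≠ 0) (h1 : ∀ k : ℂ, S ψ ≠ k • S φ)
    (hu' : S φ' ≠ 0) (h2 : ∀ k : ℂ, S ψ ≠ k • S φ')
    (hL : Lt W S φ ψ) (hA : At W S φ' ψ) : False := by
  obtain ⟨p, hp, hpN, -⟩ := hL
  obtain ⟨q, hq, hqN, -⟩ := hA
  have hp0 : p ≠ 0 := unit_ne_zero hp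
  have hq0 : q ≠ 0 := unit_ne_zero hq
  have hv0 : S ψ ≠ 0 := fun h0 => h1 0 (by simp [h0])
  have hvs : ∀ k : ℂ, S φ ≠ k • S ψ := span_swap hu h1
  have hadd : W (ketbra (φ + φ') ψ)
      = p • ketbra (S φ) (S ψ) + q • ketbra (S ψ) (S φ') := by
    rw [ketbra_add_left, map_add, hpN, hqN]
  by_cases h : ∃ k : ℂ, S (φ + φ') = k • S ψ
  · obtain ⟨a, b, -, hbN⟩ := degB hW ψ (φ + φ') h
    -- hbN : W (ketbra (φ+φ') ψ) = b • ketbra (S ψ) (S ψ)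
    obtain ⟨f, hf0, hfv⟩ := exists_dual h2
    have e1 : W (ketbra (φ + φ') ψ) f = (p * ⟪S ψ, f⟫) • S φ := by
      rw [hadd]
      simp only [LinearMap.add_apply, LinearMap.smul_apply, ketbra_apply, hf0,
        zero_smul, smul_zero, add_zero, smul_smul]
    have e2 : W (ketbra (φ + φ') ψ) f = (b * ⟪S ψ, f⟫) • S ψ := by
      rw [hbN]
      simp only [LinearMap.smul_apply, ketbra_apply, smul_smul]
    have hcoef : p * ⟪S ψ, f⟫ ≠ 0 := mul_ne_zero hp0 hfv
    have e3 : S φ = ((p * ⟪S ψ, f⟫)⁻¹ * (b * ⟪S ψ, f⟫)) • S ψ := by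
      have h4 := e1.symm.trans e2
      calc S φ = (p * ⟪S ψ, f⟫)⁻¹ • ((p * ⟪S ψ, f⟫) • S φ) := by
            rw [smul_smul, inv_mul_cancel₀ hcoef, one_smul]
        _ = ((p * ⟪S ψ, f⟫)⁻¹ * (b * ⟪S ψ, f⟫)) • S ψ := by rw [h4, smul_smul]
    exact hvs _ e3
  · push_neg at h
    have hu'' : S (φ + φ') ≠ 0 := fun h0 => h 0 (by simp [h0])
    have hv'' : ∀ k : ℂ, S ψ ≠ k • S (φ + φ') := span_swap hv0 h
    rcases dichotomyB hW (φ + φ') ψ hu'' hv'' with ⟨r, hr, hrN, -⟩ | ⟨r, hr, hrN, -⟩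
    · obtain ⟨f, hf0, hfv⟩ := exists_dual (span_swap hu' h2)
      -- f : ⟪S ψ, f⟫ = 0, ⟪S φ', f⟫ ≠ 0
      have e1 : W (ketbra (φ + φ') ψ) f = (q * ⟪S φ', f⟫) • S ψ := by
        rw [hadd]
        simp only [LinearMap.add_apply, LinearMap.smul_apply, ketbra_apply, hf0,
          zero_smul, smul_zero, zero_add, smul_smul]
      have e2 : W (ketbra (φ + φ') ψ) f = 0 := by
        rw [hrN]
        simp [hf0]
      rw [e2] at e1
      rcases smul_eq_zero.mp e1.symm with hc | hc
      · exact (mul_ne_zero hq0 hfv) hc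
      · exact hv0 hc
    · have hnz : (⟪S ψ, S ψ⟫ : ℂ) ≠ 0 := inner_self_ne_zero.mpr hv0
      have e1 : W (ketbra (φ + φ') ψ) (S ψ)
          = (p * ⟪S ψ, S ψ⟫) • S φ + (q * ⟪S φ', S ψ⟫) • S ψ := by
        rw [hadd]
        simp only [LinearMap.add_apply, LinearMap.smul_apply, ketbra_apply, smul_smul]
      have e2 : W (ketbra (φ + φ') ψ) (S ψ)
          = (r * ⟪S (φ + φ'), S ψ⟫) • S ψ := by
        rw [hrN]
        simp only [LinearMap.smul_apply, ketbra_apply, smul_smul]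
      have hcoef : p * ⟪S ψ, S ψ⟫ ≠ 0 := mul_ne_zero hp0 hnz
      have e3 : S φ = ((p * ⟪S ψ, S ψ⟫)⁻¹
          * (r * ⟪S (φ + φ'), S ψ⟫ - q * ⟪S φ', S ψ⟫)) • S ψ := by
        have h4 : (p * ⟪S ψ, S ψ⟫) • S φ
            = (r * ⟪S (φ + φ'), S ψ⟫ - q * ⟪S φ', S ψ⟫) • S ψ := by
          rw [sub_smul]
          rw [e2] at e1
          linear_combination (norm := module) -e1
        calc S φ = (p * ⟪S ψ, S ψ⟫)⁻¹ • ((p * ⟪S ψ, S ψ⟫) • S φ) := by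
              rw [smul_smul, inv_mul_cancel₀ hcoef, one_smul]
          _ = _ := by rw [h4, smul_smul]
      exact hvs _ e3

end blevel

lemma rankOne_eq_ketbra {K : Type*} [NormedAddCommGroup K] [InnerProductSpace ℂ K]
    (e : K) : rankOne e = ketbra e e := rfl

theorem stmt1 {H K : Type*}
    [NormedAddCommGroup H] [InnerProductSpace ℂ H] [FiniteDimensional ℂ H]
    [NormedAddCommGroup K] [InnerProductSpace ℂ K] [FiniteDimensional ℂ K]
    (S : H → K)
    (hext : ∃ W : (H →ₗ[ℂ] H) →ₗ[ℂ] (K →ₗ[ℂ] K),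
      ∀ φ : H, W (rankOne φ) = rankOne (S φ))
    (hray : ¬ ∃ k : K, ∀ φ : H, ∃ c : ℂ, S φ = c • k) :
    (∃ C : H →ₗ[ℂ] K, ∀ φ : H, rankOne (S φ) = rankOne (C φ)) ∨
    (∃ C : H →ₛₗ[starRingEnd ℂ] K, ∀ φ : H, rankOne (S φ) = rankOne (C φ)) := by
  classical
  obtain ⟨W, hW0⟩ := hext
  have hW : ∀ φ : H, W (ketbra φ φ) = ketbra (S φ) (S φ) := by
    intro φ
    have h := hW0 φ
    rwa [rankOne_eq_ketbra, rankOne_eq_ketbra] at h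
  push_neg at hray
  obtain ⟨φ₁, h1⟩ := hray 0
  have he₁ : S φ₁ ≠ 0 := by
    intro h0
    exact h1 0 (by rw [h0, zero_smul])
  obtain ⟨φ₂, h2⟩ := hray (S φ₁)
  have he₂ : S φ₂ ≠ 0 := fun h0 => h2 0 (by rw [h0, zero_smul])
  have h2' : ∀ k : ℂ, S φ₁ ≠ k • S φ₂ := span_swap he₁ h2
  obtain ⟨f₁, hf11, hf12⟩ := exists_dual_one h2'
  obtain ⟨f₂, hf21, hf22⟩ := exists_dual_one h2
  have hf11' : ⟪f₁, S φ₁⟫ = 1 := by rw [← inner_conj_symm f₁ (S φ₁), hf11, map_one]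
  have hf12' : ⟪f₁, S φ₂⟫ = 0 := by rw [← inner_conj_symm f₁ (S φ₂), hf12, map_zero]
  have hf21' : ⟪f₂, S φ₂⟫ = 1 := by rw [← inner_conj_symm f₂ (S φ₂), hf21, map_one]
  have hf22' : ⟪f₂, S φ₁⟫ = 0 := by rw [← inner_conj_symm f₂ (S φ₁), hf22, map_zero]
  have hE12 := hE_B W S hW φ₁ φ₂
  have perpU12 := core_perp_u hE12
  have perpV12 := core_perp_v hE12
  have hE1' : ketbra (S (φ₁ + φ₂)) (S (φ₁ + φ₂))
      = ketbra (S φ₁) (S φ₁) + ketbra (S φ₂) (S φ₂)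
        + W (ketbra φ₂ φ₁) + W (ketbra φ₁ φ₂) := by
    have h := hE12 1
    simpa using h
  have hw1 : ⟪S (φ₁ + φ₂), f₁⟫ * ⟪f₁, S (φ₁ + φ₂)⟫ = 1 := by
    have h := congrArg (fun T : K →ₗ[ℂ] K => ⟪f₁, T f₁⟫) hE1'
    simp only [LinearMap.add_apply, inner_add_right, inner_ketbra] at h
    rw [hf11, hf11', hf12, hf12', (perpV12 f₁ hf12).1, (perpV12 f₁ hf12).2] at h
    rw [h]; ring
  have hw2' : ⟪S (φ₁ + φ₂), f₂⟫ * ⟪f₂, S (φ₁ + φ₂)⟫ = 1 := by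
    have h := congrArg (fun T : K →ₗ[ℂ] K => ⟪f₂, T f₂⟫) hE1'
    simp only [LinearMap.add_apply, inner_add_right, inner_ketbra] at h
    rw [hf21, hf21', hf22, hf22', (perpU12 f₂ hf22).1, (perpU12 f₂ hf22).2] at h
    rw [h]; ring
  have hw2 : ∀ k : ℂ, S (φ₁ + φ₂) ≠ k • S φ₁ := by
    intro k hk
    rw [hk, inner_smul_left, inner_smul_right, hf22, hf22'] at hw2'
    simp at hw2'
  rcases dichotomyB hW φ₁ φ₂ he₁ h2 with hL12 | hA12
  · -- linear case
    left
    refine ⟨{ toFun := fun φ => W (ketbra φ φ₁) f₁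
              map_add' := by
                intro x y
                show W (ketbra (x + y) φ₁) f₁ = W (ketbra x φ₁) f₁ + W (ketbra y φ₁) f₁
                rw [ketbra_add_left, map_add, LinearMap.add_apply]
              map_smul' := by
                intro c x
                show W (ketbra (c • x) φ₁) f₁ = c • W (ketbra x φ₁) f₁
                rw [ketbra_smul_left, map_smul, LinearMap.smul_apply] },
            fun φ => ?_⟩
    show rankOne (S φ) = rankOne (W (ketbra φ φ₁) f₁)
    by_cases h0 : S φ = 0
    · rw [h0, (zeroB hW φ₁ φ h0).2, LinearMap.zero_apply]
    · obtain ⟨z, hz, hval⟩ : ∃ z : ℂ, z * conj z = 1 ∧ W (ketbra φ φ₁) f₁ = z • S φ := by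
        by_cases hsp : ∃ c : ℂ, S φ = c • S φ₁
        · obtain ⟨c, hc⟩ := hsp
          have hφ2 : ∀ k : ℂ, S φ₂ ≠ k • S φ := by
            intro k hk
            rw [hc, smul_smul] at hk
            exact h2 (k * c) hk
          have hLφ2 : Lt W S φ φ₂ := by
            rcases dichotomyB hW φ φ₂ h0 hφ2 with hL | hA
            · exact hL
            · exact (prop_b hW φ₁ φ φ₂ he₁ h2 h0 hφ2 hL12 hA).elim
          have hL1w : Lt W S φ₁ (φ₁ + φ₂) := by
            rcases dichotomyB hW φ₁ (φ₁ + φ₂) he₁ hw2 with hL | hA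
            · exact hL
            · exact (prop_a hW φ₁ φ₂ (φ₁ + φ₂) he₁ h2 hw2 hL12 hA).elim
          have hwφ : ∀ k : ℂ, S (φ₁ + φ₂) ≠ k • S φ := by
            intro k hk
            rw [hc, smul_smul] at hk
            exact hw2 (k * c) hk
          have hLφw : Lt W S φ (φ₁ + φ₂) := by
            rcases dichotomyB hW φ (φ₁ + φ₂) h0 hwφ with hL | hA
            · exact hL
            · exact (prop_b hW φ₁ φ (φ₁ + φ₂) he₁ hw2 h0 hwφ hL1w hA).elim
          obtain ⟨p₂, hp₂u, hp₂N, -⟩ := hLφ2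
          obtain ⟨p₃, hp₃u, hp₃N, -⟩ := hLφw
          refine ⟨p₃ * ⟪S (φ₁ + φ₂), f₁⟫, ?_, ?_⟩
          · rw [map_mul, inner_conj_symm]
            calc p₃ * ⟪S (φ₁ + φ₂), f₁⟫ * (conj p₃ * ⟪f₁, S (φ₁ + φ₂)⟫)
                = (p₃ * conj p₃) * (⟪S (φ₁ + φ₂), f₁⟫ * ⟪f₁, S (φ₁ + φ₂)⟫) := by ring
              _ = 1 := by rw [hp₃u, hw1, mul_one]
          · have hsplit : W (ketbra φ φ₁)
                = W (ketbra φ (φ₁ + φ₂)) - W (ketbra φ φ₂) := by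
              rw [ketbra_add_right, map_add, add_sub_cancel_right]
            rw [hsplit, LinearMap.sub_apply, hp₃N, hp₂N]
            simp only [LinearMap.smul_apply, ketbra_apply, hf12, zero_smul, smul_zero,
              sub_zero, smul_smul]
        · push_neg at hsp
          have hφ1 : ∀ k : ℂ, S φ₁ ≠ k • S φ := span_swap he₁ hsp
          have hLφ1 : Lt W S φ φ₁ := by
            rcases dichotomyB hW φ φ₁ h0 hφ1 with hL | hA
            · exact hL
            · exact (prop_b hW φ₂ φ φ₁ he₂ h2' h0 hφ1 (Lt_swap hL12) hA).elim
          obtain ⟨p, hpu, hpN, -⟩ := hLφ1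
          refine ⟨p, hpu, ?_⟩
          rw [hpN]
          simp only [LinearMap.smul_apply, ketbra_apply, hf11, one_smul]
      rw [rankOne_eq_ketbra, rankOne_eq_ketbra, hval, ketbra_unit _ hz]
  · -- antilinear case
    right
    refine ⟨{ toFun := fun φ => W (ketbra φ₁ φ) f₁
              map_add' := by
                intro x y
                show W (ketbra φ₁ (x + y)) f₁ = W (ketbra φ₁ x) f₁ + W (ketbra φ₁ y) f₁
                rw [ketbra_add_right, map_add, LinearMap.add_apply]
              map_smul' := by
                intro c x
                show W (ketbra φ₁ (c • x)) f₁ = conj c • W (ketbra φ₁ x) f₁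
                rw [ketbra_smul_right, map_smul, LinearMap.smul_apply] },
            fun φ => ?_⟩
    show rankOne (S φ) = rankOne (W (ketbra φ₁ φ) f₁)
    by_cases h0 : S φ = 0
    · rw [h0, (zeroB hW φ₁ φ h0).1, LinearMap.zero_apply]
    · obtain ⟨z, hz, hval⟩ : ∃ z : ℂ, z * conj z = 1 ∧ W (ketbra φ₁ φ) f₁ = z • S φ := by
        by_cases hsp : ∃ c : ℂ, S φ = c • S φ₁
        · obtain ⟨c, hc⟩ := hsp
          have hφ2 : ∀ k : ℂ, S φ₂ ≠ k • S φ := by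
            intro k hk
            rw [hc, smul_smul] at hk
            exact h2 (k * c) hk
          have hAφ2 : At W S φ φ₂ := by
            rcases dichotomyB hW φ φ₂ h0 hφ2 with hL | hA
            · exact (prop_b hW φ φ₁ φ₂ h0 hφ2 he₁ h2 hL hA12).elim
            · exact hA
          have hA1w : At W S φ₁ (φ₁ + φ₂) := by
            rcases dichotomyB hW φ₁ (φ₁ + φ₂) he₁ hw2 with hL | hA
            · exact (prop_a hW φ₁ (φ₁ + φ₂) φ₂ he₁ hw2 h2 hL hA12).elim
            · exact hA
          have hwφ : ∀ k : ℂ, S (φ₁ + φ₂) ≠ k • S φ := by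
            intro k hk
            rw [hc, smul_smul] at hk
            exact hw2 (k * c) hk
          have hAφw : At W S φ (φ₁ + φ₂) := by
            rcases dichotomyB hW φ (φ₁ + φ₂) h0 hwφ with hL | hA
            · exact (prop_b hW φ φ₁ (φ₁ + φ₂) h0 hwφ he₁ hw2 hL hA1w).elim
            · exact hA
          obtain ⟨q₂, hq₂u, -, hq₂M⟩ := hAφ2
          obtain ⟨q₃, hq₃u, -, hq₃M⟩ := hAφw
          refine ⟨conj q₃ * ⟪S (φ₁ + φ₂), f₁⟫, ?_, ?_⟩
          · rw [map_mul, inner_conj_symm, Complex.conj_conj]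
            calc conj q₃ * ⟪S (φ₁ + φ₂), f₁⟫ * (q₃ * ⟪f₁, S (φ₁ + φ₂)⟫)
                = (q₃ * conj q₃) * (⟪S (φ₁ + φ₂), f₁⟫ * ⟪f₁, S (φ₁ + φ₂)⟫) := by ring
              _ = 1 := by rw [hq₃u, hw1, mul_one]
          · have hsplit : W (ketbra φ₁ φ)
                = W (ketbra (φ₁ + φ₂) φ) - W (ketbra φ₂ φ) := by
              rw [ketbra_add_left, map_add, add_sub_cancel_right]
            rw [hsplit, LinearMap.sub_apply, hq₃M, hq₂M]
            simp only [LinearMap.smul_apply, ketbra_apply, hf12, zero_smul, smul_zero,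
              sub_zero, smul_smul]
        · push_neg at hsp
          have hφ1 : ∀ k : ℂ, S φ₁ ≠ k • S φ := span_swap he₁ hsp
          have hAφ1 : At W S φ φ₁ := by
            rcases dichotomyB hW φ φ₁ h0 hφ1 with hL | hA
            · exact (prop_b hW φ φ₂ φ₁ h0 hφ1 he₂ h2' hL (At_swap hA12)).elim
            · exact hA
          obtain ⟨q, hqu, -, hqM⟩ := hAφ1
          refine ⟨conj q, ?_, ?_⟩
          · rw [Complex.conj_conj]; linear_combination hqu
          · rw [hqM]
            simp only [LinearMap.smul_apply, ketbra_apply, hf11, one_smul]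
      rw [rankOne_eq_ketbra, rankOne_eq_ketbra, hval, ketbra_unit _ hz]
end

section
/- Let H, K be finite-dimensional complex Hilbert spaces, T : H → K any map, and suppose the map sending the rank-one operator (f,·)f to (Tf,·)(Tf) is the restriction of a linear map W : L(H) → L(K). Then there exists a positive operator L on H such that ‖Tf‖² = (f, Lf) for all f ∈ H. -/
/-!
Since the trace pairing `(M, A) ↦ tr (M A)` on `End H` is nondegenerate, the linear functional
`A ↦ tr (W A)` is of the form `A ↦ tr (L A)` for some operator `L`. Evaluating at the rank-one
operator `(f,·)f` gives `(f, L f) = tr (W ((f,·)f)) = tr ((Tf,·)Tf) = ‖Tf‖²`, which is real and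
nonnegative, so `L` is positive.
-/

open scoped ComplexConjugate

namespace LinearMap

theorem trace_comp_smulRight {R M : Type*} [CommRing R] [AddCommGroup M] [Module R M]
    [Module.Free R M] [Module.Finite R M] (A : Module.End R M) (f : Module.Dual R M) (x : M) :
    trace R M (A ∘ₗ f.smulRight x) = f (A x) := by
  rw [show A ∘ₗ f.smulRight x = f.smulRight (A x) by ext; simp, trace_smulRight]

theorem exists_trace_comp_eq {K V : Type*} [Field K] [AddCommGroup V] [Module K V]
    [FiniteDimensional K V] (φ : Module.Dual K (Module.End K V)) :
    ∃ M : Module.End K V, ∀ A, trace K V (M ∘ₗ A) = φ A := by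
  let tracePairing := (mul K (Module.End K V)).compr₂ (trace K V)
  have injective : Function.Injective tracePairing := by
    rw [← ker_eq_bot, Submodule.eq_bot_iff]
    intro M hM
    ext x
    refine (Module.forall_dual_apply_eq_zero_iff K (M x)).mp fun f => ?_
    rw [← trace_comp_smulRight]
    exact LinearMap.congr_fun hM (f.smulRight x)
  obtain ⟨M, hM⟩ := (injective_iff_surjective_of_finrank_eq_finrank
    Subspace.dual_finrank_eq.symm).mp injective φ
  exact ⟨M, LinearMap.congr_fun hM⟩

end LinearMap

section rankOne

variable {H : Type*} [NormedAddCommGroup H] [InnerProductSpace ℂ H] [FiniteDimensional ℂ H]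

theorem trace_comp_rankOne (M : Module.End ℂ H) (e : H) :
    LinearMap.trace ℂ H (M ∘ₗ rankOne e) = inner ℂ e (M e) :=
  LinearMap.trace_comp_smulRight M (innerₛₗ ℂ e) e

theorem trace_rankOne (e : H) : LinearMap.trace ℂ H (rankOne e) = ((‖e‖ ^ 2 : ℝ) : ℂ) := by
  simpa [inner_self_eq_norm_sq_to_K] using trace_comp_rankOne LinearMap.id e

end rankOne

theorem stmt2 {H K : Type*}
    [NormedAddCommGroup H] [InnerProductSpace ℂ H] [FiniteDimensional ℂ H]
    [NormedAddCommGroup K] [InnerProductSpace ℂ K] [FiniteDimensional ℂ K]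
    (T : H → K)
    (hext : ∃ W : (H →ₗ[ℂ] H) →ₗ[ℂ] (K →ₗ[ℂ] K),
      ∀ f : H, W (rankOne f) = rankOne (T f)) :
    ∃ L : H →ₗ[ℂ] H, IsPosOp L ∧ ∀ f : H, (inner ℂ f (L f) : ℂ) = ((‖T f‖ ^ 2 : ℝ) : ℂ) := by
  obtain ⟨W, hW⟩ := hext
  obtain ⟨L, hL⟩ := LinearMap.exists_trace_comp_eq (LinearMap.trace ℂ K ∘ₗ W)
  have hLf (f : H) : inner ℂ f (L f) = ((‖T f‖ ^ 2 : ℝ) : ℂ) := by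
    rw [← trace_comp_rankOne, hL, LinearMap.comp_apply, hW, trace_rankOne]
  refine ⟨L, fun f => ?_, hLf⟩
  rw [hLf, Complex.ofReal_re, Complex.ofReal_im]
  exact ⟨by positivity, rfl⟩
end

section
/- Let H, K be finite-dimensional complex Hilbert spaces and T a map from density operators of the form ρ_φ = (φ,·)φ (φ a unit vector in H) to positive trace-class operators on K. Suppose that for every self-adjoint operator A on K there exists a self-adjoint operator τ(A) on H with Tr(A · Tρ_φ) = (φ, τ(A)φ) for all unit vectors φ. Then T extends to a linear map on the span of the rank-one projections: explicitly, there exist operators L_{pq} on H, with L_{pq}* = L_{qp}, such that Tρ_φ = Σ_{p,q} Tr(L_{pq} ρ_φ) (k_q,·)k_p for any orthonormal basis (k_p) of K. -/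
open scoped ComplexConjugate

/-- The rank-one operator `(a,·)b : f ↦ ⟪a, f⟫ b`. -/
noncomputable def rankOne2 {K : Type*} [NormedAddCommGroup K] [InnerProductSpace ℂ K]
    (a b : K) : K →ₗ[ℂ] K where
  toFun f := (inner ℂ a f : ℂ) • b
  map_add' x y := by simp [inner_add_right, add_smul]
  map_smul' c x := by simp [inner_smul_right, smul_smul]

/-! Writing an operator `A` on `K` as `ℜ A + i ℑ A` with self-adjoint parts, the representation
`Tr (A ∘ T φ) = ⟪φ, τ(A) φ⟫` extends to every `A`, with `τ(ℜ A) + i τ(ℑ A)` in place of `τ(A)`.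
For `A = (k_p, ·) k_q` this yields operators `L_pq` whose quadratic forms are the matrix
coefficients `⟪k_p, T φ k_q⟫`, so expanding `T φ` in the basis `(k_p)` gives the formula. Since
`T φ` is self-adjoint and an operator on a complex space is determined by its quadratic form on
unit vectors, `L_pq* = L_qp`. -/

local notation "⟪" x ", " y "⟫" => @inner ℂ _ _ x y

section RankOne

variable {E : Type*} [NormedAddCommGroup E] [InnerProductSpace ℂ E]

lemma rankOne2_apply (a b x : E) : rankOne2 a b x = ⟪a, x⟫ • b := rfl

lemma comp_rankOne2 (A : E →ₗ[ℂ] E) (a b : E) : A ∘ₗ rankOne2 a b = rankOne2 a (A b) := by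
  ext x
  simp [rankOne2_apply]

lemma OrthonormalBasis.eq_sum_inner_smul_rankOne2 {ι : Type*} [Fintype ι]
    (e : OrthonormalBasis ι ℂ E) (B : E →ₗ[ℂ] E) :
    B = ∑ p, ∑ q, ⟪e p, B (e q)⟫ • rankOne2 (e q) (e p) := by
  ext x
  simp only [LinearMap.sum_apply, LinearMap.smul_apply, rankOne2_apply, smul_smul,
    ← Finset.sum_smul]
  conv_lhs => rw [← e.sum_repr' (B x)]
  refine Finset.sum_congr rfl fun p _ => congrArg (· • e p) ?_
  conv_lhs => rw [← e.sum_repr' x]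
  simp [inner_sum, inner_smul_right, mul_comm]

variable [FiniteDimensional ℂ E]

lemma trace_rankOne2 (a b : E) : LinearMap.trace ℂ E (rankOne2 a b) = ⟪a, b⟫ := by
  let e := stdOrthonormalBasis ℂ E
  rw [LinearMap.trace_eq_matrix_trace ℂ e.toBasis, Matrix.trace, ← e.sum_inner_mul_inner a b]
  simp [LinearMap.toMatrix_apply, rankOne2_apply, OrthonormalBasis.repr_apply_apply]

lemma trace_comp_rankOne_s6 (B : E →ₗ[ℂ] E) (φ : E) :
    LinearMap.trace ℂ E (B ∘ₗ rankOne φ) = ⟪φ, B φ⟫ := by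
  rw [show rankOne φ = rankOne2 φ φ from rfl, comp_rankOne2, trace_rankOne2]

lemma trace_rankOne2_comp (B : E →ₗ[ℂ] E) (a b : E) :
    LinearMap.trace ℂ E (rankOne2 a b ∘ₗ B) = ⟪a, B b⟫ := by
  rw [LinearMap.trace_comp_comm', comp_rankOne2, trace_rankOne2]

end RankOne

lemma IsPosOp.isSymmetric {E : Type*} [NormedAddCommGroup E] [InnerProductSpace ℂ E]
    {D : E →ₗ[ℂ] E} (hD : IsPosOp D) : D.IsSymmetric := by
  refine (LinearMap.isSymmetric_iff_inner_map_self_real D).mpr fun v => ?_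
  rw [inner_conj_symm]
  exact (Complex.conj_eq_iff_im.mpr (hD v).2).symm.trans (inner_conj_symm _ _)

lemma LinearMap.ext_of_inner_map_self_of_norm_eq_one {E : Type*} [NormedAddCommGroup E]
    [InnerProductSpace ℂ E] {L₁ L₂ : E →ₗ[ℂ] E}
    (h : ∀ φ : E, ‖φ‖ = 1 → ⟪φ, L₁ φ⟫ = ⟪φ, L₂ φ⟫) : L₁ = L₂ := by
  refine (ext_inner_map L₁ L₂).mp fun x => ?_
  rcases eq_or_ne x 0 with rfl | hx
  · simp
  have hx' := h _ (norm_smul_inv_norm (𝕜 := ℂ) hx)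
  simp only [map_smul, inner_smul_left, inner_smul_right] at hx'
  have hc : (‖x‖ : ℂ)⁻¹ ≠ 0 := by simpa using hx
  have hx_inner : ⟪x, L₁ x⟫ = ⟪x, L₂ x⟫ :=
    mul_left_cancel₀ ((map_ne_zero _).mpr hc) (mul_left_cancel₀ hc hx')
  rw [← inner_conj_symm (L₁ x), hx_inner, inner_conj_symm]

lemma exists_trace_comp_eq_inner_map_self {H K : Type*}
    [NormedAddCommGroup H] [InnerProductSpace ℂ H]
    [NormedAddCommGroup K] [InnerProductSpace ℂ K] [FiniteDimensional ℂ K]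
    (D : H → K →ₗ[ℂ] K) (S : Set H)
    (hτ : ∀ A : K →ₗ[ℂ] K, A.IsSymmetric →
      ∃ τA : H →ₗ[ℂ] H, ∀ φ ∈ S, LinearMap.trace ℂ K (A ∘ₗ D φ) = ⟪φ, τA φ⟫)
    (A : K →ₗ[ℂ] K) :
    ∃ B : H →ₗ[ℂ] H, ∀ φ ∈ S, LinearMap.trace ℂ K (A ∘ₗ D φ) = ⟪φ, B φ⟫ := by
  obtain ⟨τre, hre⟩ := hτ _ ((LinearMap.isSymmetric_iff_isSelfAdjoint _).mpr (realPart A).2)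
  obtain ⟨τim, him⟩ := hτ _ ((LinearMap.isSymmetric_iff_isSelfAdjoint _).mpr (imaginaryPart A).2)
  refine ⟨τre + Complex.I • τim, fun φ hφ => ?_⟩
  conv_lhs => rw [← realPart_add_I_smul_imaginaryPart A]
  rw [LinearMap.add_comp, LinearMap.smul_comp, map_add, map_smul, hre φ hφ, him φ hφ,
    LinearMap.add_apply, LinearMap.smul_apply, inner_add_right, inner_smul_right, smul_eq_mul]

theorem stmt6_general {H K : Type*}
    [NormedAddCommGroup H] [InnerProductSpace ℂ H] [FiniteDimensional ℂ H]
    [NormedAddCommGroup K] [InnerProductSpace ℂ K] [FiniteDimensional ℂ K]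
    (T : H → (K →ₗ[ℂ] K))
    (hpos : ∀ φ : H, ‖φ‖ = 1 → IsPosOp (T φ))
    (hτ : ∀ A : K →ₗ[ℂ] K, A.IsSymmetric →
      ∃ τA : H →ₗ[ℂ] H, τA.IsSymmetric ∧
        ∀ φ : H, ‖φ‖ = 1 → LinearMap.trace ℂ K (A ∘ₗ T φ) = (inner ℂ φ (τA φ) : ℂ)) :
    ∀ k : Fin (Module.finrank ℂ K) → K, Orthonormal ℂ k →
      Submodule.span ℂ (Set.range k) = ⊤ →
      ∃ L : Fin (Module.finrank ℂ K) → Fin (Module.finrank ℂ K) → (H →ₗ[ℂ] H),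
        (∀ p q, ∀ x y : H, (inner ℂ (L p q x) y : ℂ) = (inner ℂ x (L q p y) : ℂ)) ∧
        ∀ φ : H, ‖φ‖ = 1 →
          T φ = ∑ p, ∑ q,
            (LinearMap.trace ℂ H (L p q ∘ₗ rankOne φ)) • rankOne2 (k q) (k p) := by
  intro k hk hspan
  let e := OrthonormalBasis.mk hk hspan.ge
  choose L hL using fun p q => exists_trace_comp_eq_inner_map_self T {φ | ‖φ‖ = 1}
    (fun A hA => (hτ A hA).imp fun _ h => h.2) (rankOne2 (k p) (k q))
  have hLT : ∀ p q φ, ‖φ‖ = 1 → ⟪φ, L p q φ⟫ = ⟪k p, T φ (k q)⟫ := fun p q φ hφ => by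
    rw [← hL p q φ hφ, trace_rankOne2_comp]
  refine ⟨L, fun p q x y => ?_, fun φ hφ => ?_⟩
  · have hadj : LinearMap.adjoint (L p q) = L q p :=
      LinearMap.ext_of_inner_map_self_of_norm_eq_one fun φ hφ => by
        rw [LinearMap.adjoint_inner_right, ← inner_conj_symm, hLT p q φ hφ, inner_conj_symm,
          hLT q p φ hφ]
        exact (hpos φ hφ).isSymmetric (k q) (k p)
    rw [← hadj, LinearMap.adjoint_inner_right]
  · rw [e.eq_sum_inner_smul_rankOne2 (T φ)]
    simp only [trace_comp_rankOne_s6, hLT _ _ φ hφ, e, OrthonormalBasis.coe_mk]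

theorem stmt6 {H K : Type*}
    [NormedAddCommGroup H] [InnerProductSpace ℂ H] [FiniteDimensional ℂ H]
    [NormedAddCommGroup K] [InnerProductSpace ℂ K] [FiniteDimensional ℂ K]
    (T : H → (K →ₗ[ℂ] K))
    (hpos : ∀ φ : H, ‖φ‖ = 1 → IsPosOp (T φ))
    (htr : ∀ φ : H, ‖φ‖ = 1 → LinearMap.trace ℂ K (T φ) = 1)
    (hτ : ∀ A : K →ₗ[ℂ] K, A.IsSymmetric →
      ∃ τA : H →ₗ[ℂ] H, τA.IsSymmetric ∧
        ∀ φ : H, ‖φ‖ = 1 → LinearMap.trace ℂ K (A ∘ₗ T φ) = (inner ℂ φ (τA φ) : ℂ)) :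
    ∀ k : Fin (Module.finrank ℂ K) → K, Orthonormal ℂ k →
      Submodule.span ℂ (Set.range k) = ⊤ →
      ∃ L : Fin (Module.finrank ℂ K) → Fin (Module.finrank ℂ K) → (H →ₗ[ℂ] H),
        (∀ p q, ∀ x y : H, (inner ℂ (L p q x) y : ℂ) = (inner ℂ x (L q p y) : ℂ)) ∧
        ∀ φ : H, ‖φ‖ = 1 →
          T φ = ∑ p, ∑ q,
            (LinearMap.trace ℂ H (L p q ∘ₗ rankOne φ)) • rankOne2 (k q) (k p) :=
  stmt6_general T hpos hτ
end

section
/- Let H, K be finite-dimensional complex Hilbert spaces and T : H → K a map such that on every two-dimensional subspace of H, T agrees up to unimodular scalar factors with a linear or antilinear map on that subspace (i.e., T(f + αh) = θ₁(f,α)Tf + θ₂(f,α)·α·Th or with conj(α), for unimodular θᵢ). If e₁,…,e_n is an orthonormal basis of H, then T(Σᵢ αᵢ eᵢ) = Σᵢ θᵢ(α) αᵢ' T(eᵢ) where each αᵢ' is αᵢ or its conjugate and θᵢ(α) are unimodular; in particular the range of T lies in the span of T(e₁),…,T(e_n). -/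
open scoped ComplexConjugate

/-!
Peel off one basis vector at a time: writing `∑ aᵢ eᵢ = (∑_{i ≠ j} aᵢ eᵢ) + a_j e_j`, the
two-dimensional hypothesis splits `T` of the sum into a unimodular multiple of `T` of the
shorter sum plus a unimodular multiple of `a_j` or `conj a_j` times `T e_j`; the phases
accumulate multiplicatively. The empty sum needs `T 0 = 0`, which follows from the hypothesis
at `f = h = 0`, `α = 3`.
-/

/-- On every plane `span {f, h}`, `T` agrees up to unimodular factors with a linear
(`α' = α`) or an antilinear (`α' = conj α`) map. -/
def PhaseSemilinearOnPlanes {V W : Type*} [AddCommGroup V] [Module ℂ V] [AddCommGroup W]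
    [Module ℂ W] (T : V → W) : Prop :=
  ∀ (f h : V) (α : ℂ), ∃ θ₁ θ₂ α' : ℂ, ‖θ₁‖ = 1 ∧ ‖θ₂‖ = 1 ∧ (α' = α ∨ α' = conj α) ∧
    T (f + α • h) = θ₁ • T f + (θ₂ * α') • T h

lemma Complex.add_mul_three_ne_one {θ₁ θ₂ : ℂ} (h₁ : ‖θ₁‖ = 1) (h₂ : ‖θ₂‖ = 1) :
    θ₁ + θ₂ * 3 ≠ 1 := by
  intro h
  have h₃ : ‖θ₂ * 3‖ = 3 := by simp [h₂]
  have : ‖θ₂ * 3‖ ≤ ‖(1 : ℂ)‖ + ‖θ₁‖ := by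
    rw [show θ₂ * 3 = 1 - θ₁ by linear_combination h]
    exact norm_sub_le _ _
  rw [h₃, h₁, norm_one] at this
  norm_num at this

namespace PhaseSemilinearOnPlanes

variable {V W : Type*} [AddCommGroup V] [Module ℂ V] [AddCommGroup W] [Module ℂ W]
  {T : V → W}

lemma of_forall_linear_or_antilinear
    (hT : ∀ (f h : V) (α : ℂ), ∃ θ₁ θ₂ : ℂ, ‖θ₁‖ = 1 ∧ ‖θ₂‖ = 1 ∧
      (T (f + α • h) = θ₁ • T f + (θ₂ * α) • T h ∨
       T (f + α • h) = θ₁ • T f + (θ₂ * conj α) • T h)) :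
    PhaseSemilinearOnPlanes T := by
  intro f h α
  obtain ⟨θ₁, θ₂, h₁, h₂, hlin | hanti⟩ := hT f h α
  · exact ⟨θ₁, θ₂, α, h₁, h₂, .inl rfl, hlin⟩
  · exact ⟨θ₁, θ₂, conj α, h₁, h₂, .inr rfl, hanti⟩

lemma map_zero (hT : PhaseSemilinearOnPlanes T) : T 0 = 0 := by
  obtain ⟨θ₁, θ₂, α', h₁, h₂, hα', hT0⟩ := hT 0 0 3
  have hα'3 : α' = 3 := by
    rcases hα' with rfl | rfl
    · rfl
    · exact Complex.conj_ofNat 3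
  subst hα'3
  have hsmul : (1 - (θ₁ + θ₂ * 3)) • T 0 = 0 := by
    rw [sub_smul, add_smul, one_smul, sub_eq_zero]
    simpa using hT0
  exact (smul_eq_zero.mp hsmul).resolve_left
    (sub_ne_zero.mpr (Complex.add_mul_three_ne_one h₁ h₂).symm)

lemma map_sum_smul (hT : PhaseSemilinearOnPlanes T) {ι : Type*} (e : ι → V) (a : ι → ℂ)
    (s : Finset ι) :
    ∃ θ a' : ι → ℂ, (∀ i, ‖θ i‖ = 1) ∧ (∀ i, a' i = a i ∨ a' i = conj (a i)) ∧
      T (∑ i ∈ s, a i • e i) = ∑ i ∈ s, (θ i * a' i) • T (e i) := by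
  classical
  induction s using Finset.induction_on with
  | empty => exact ⟨1, a, fun _ => norm_one, fun _ => .inl rfl, by simp [hT.map_zero]⟩
  | insert j s hj ih =>
    obtain ⟨θ, a', hθ, ha', hTs⟩ := ih
    obtain ⟨θ₁, θ₂, α', h₁, h₂, hα', hTj⟩ := hT (∑ i ∈ s, a i • e i) (e j) (a j)
    refine ⟨Function.update (fun i => θ₁ * θ i) j θ₂, Function.update a' j α', ?_, ?_, ?_⟩
    · intro i
      rcases eq_or_ne i j with rfl | hij
      · simpa using h₂
      · simp [hij, h₁, hθ i]
    · intro i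
      rcases eq_or_ne i j with rfl | hij
      · simpa using hα'
      · simpa [hij] using ha' i
    · have hs : ∀ i ∈ s, i ≠ j := fun i hi hij => hj (hij ▸ hi)
      rw [Finset.sum_insert hj, Finset.sum_insert hj, add_comm, hTj, hTs, Finset.smul_sum,
        add_comm]
      simp only [Function.update_self]
      congr 1
      refine Finset.sum_congr rfl fun i hi => ?_
      rw [Function.update_of_ne (hs i hi), Function.update_of_ne (hs i hi), smul_smul, mul_assoc]

end PhaseSemilinearOnPlanes

theorem stmt9_general {H K : Type*}
    [NormedAddCommGroup H] [InnerProductSpace ℂ H]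
    [NormedAddCommGroup K] [InnerProductSpace ℂ K]
    (T : H → K)
    (h2 : ∀ (f h : H) (α : ℂ), ∃ θ₁ θ₂ : ℂ,
      ‖θ₁‖ = 1 ∧ ‖θ₂‖ = 1 ∧
      (T (f + α • h) = θ₁ • T f + (θ₂ * α) • T h ∨
       T (f + α • h) = θ₁ • T f + (θ₂ * (starRingEnd ℂ) α) • T h)) :
    ∀ (n : ℕ) (e : Fin n → H), Orthonormal ℂ e →
      Submodule.span ℂ (Set.range e) = ⊤ →
      ∀ a : Fin n → ℂ, ∃ (θ : Fin n → ℂ) (a' : Fin n → ℂ),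
        (∀ i, ‖θ i‖ = 1) ∧
        (∀ i, a' i = a i ∨ a' i = (starRingEnd ℂ) (a i)) ∧
        T (∑ i, a i • e i) = ∑ i, (θ i * a' i) • T (e i) ∧
        T (∑ i, a i • e i) ∈ Submodule.span ℂ (Set.range fun i => T (e i)) := by
  intro n e _ _ a
  obtain ⟨θ, a', hθ, ha', hTa⟩ :=
    (PhaseSemilinearOnPlanes.of_forall_linear_or_antilinear h2).map_sum_smul e a Finset.univ
  refine ⟨θ, a', hθ, ha', hTa, ?_⟩
  rw [hTa]
  exact Submodule.sum_smul_mem _ _ fun i _ => Submodule.subset_span ⟨i, rfl⟩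

theorem stmt9 {H K : Type*}
    [NormedAddCommGroup H] [InnerProductSpace ℂ H] [FiniteDimensional ℂ H]
    [NormedAddCommGroup K] [InnerProductSpace ℂ K] [FiniteDimensional ℂ K]
    (T : H → K)
    (h2 : ∀ (f h : H) (α : ℂ), ∃ θ₁ θ₂ : ℂ,
      ‖θ₁‖ = 1 ∧ ‖θ₂‖ = 1 ∧
      (T (f + α • h) = θ₁ • T f + (θ₂ * α) • T h ∨
       T (f + α • h) = θ₁ • T f + (θ₂ * (starRingEnd ℂ) α) • T h)) :
    ∀ (n : ℕ) (e : Fin n → H), Orthonormal ℂ e →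
      Submodule.span ℂ (Set.range e) = ⊤ →
      ∀ a : Fin n → ℂ, ∃ (θ : Fin n → ℂ) (a' : Fin n → ℂ),
        (∀ i, ‖θ i‖ = 1) ∧
        (∀ i, a' i = a i ∨ a' i = (starRingEnd ℂ) (a i)) ∧
        T (∑ i, a i • e i) = ∑ i, (θ i * a' i) • T (e i) ∧
        T (∑ i, a i • e i) ∈ Submodule.span ℂ (Set.range fun i => T (e i)) :=
  stmt9_general T h2
end

section
/- In the quantum-logic framework below, if a and b are commuting propositions and p is a pure state, then (p : p_b)·p_b(a) = (p : p_{b∧a}), assuming the commutative no-signal hypothesis (CNS). -/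
theorem stmt12_general {Lg P : Type*} [Lattice Lg] [BoundedOrder Lg]
    (compl : Lg → Lg) (Comm : Lg → Lg → Prop)
    (val : P → Lg → ℝ) (s : P → Lg) (collapse : P → Lg → P)
    (p : P) (a b : Lg)
    -- Commutative no-signal hypothesis (CNS), with the common value identified as `p(a)`
    -- (which follows from taking the singleton family `{1}`):
    (hCNS : ∀ (n : ℕ) (bs : Fin n → Lg) (c : Lg),
      (∀ j, Comm c (bs j)) →
      (∀ i j, i ≠ j → bs i ≤ compl (bs j)) →
      Finset.univ.sup bs = ⊤ →
      ∑ j, val p (s (collapse p (bs j))) * val (collapse p (bs j)) c = val p c)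
    -- the family `{b, b′}` is commuting with `a`, pairwise orthogonal and exhaustive:
    (hfam2 : (∀ j, Comm a (![b, compl b] j)) ∧
      (∀ i j, i ≠ j → ![b, compl b] i ≤ compl (![b, compl b] j)) ∧
      Finset.univ.sup ![b, compl b] = ⊤)
    -- the family `{b ∧ a, b ∧ a′, b′}` likewise (uses commutativity of `a` and `b`):
    (hfam3 : (∀ j, Comm a (![b ⊓ a, b ⊓ compl a, compl b] j)) ∧
      (∀ i j, i ≠ j →
        ![b ⊓ a, b ⊓ compl a, compl b] i ≤ compl (![b ⊓ a, b ⊓ compl a, compl b] j)) ∧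
      Finset.univ.sup ![b ⊓ a, b ⊓ compl a, compl b] = ⊤)
    (hzero : val (collapse p (b ⊓ compl a)) a = 0)
    (hone : val (collapse p (b ⊓ a)) a = 1) :
    val p (s (collapse p b)) * val (collapse p b) a =
      val p (s (collapse p (b ⊓ a))) := by
  have hsplit := hCNS 2 ![b, compl b] a hfam2.1 hfam2.2.1 hfam2.2.2
  have hrefine := hCNS 3 ![b ⊓ a, b ⊓ compl a, compl b] a hfam3.1 hfam3.2.1 hfam3.2.2
  simp only [Fin.sum_univ_two, Fin.sum_univ_three, Matrix.cons_val_zero, Matrix.cons_val_one,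
    Matrix.cons_val_two, Matrix.head_cons, Matrix.tail_cons] at hsplit hrefine
  rw [hzero, hone] at hrefine
  -- the two CNS expansions of `p(a)` share the `b′` summand
  linarith

/-- Quantum-logic framework: `Lg` is an orthomodular-poset-style logic (here a bounded
lattice with an orthocomplementation map `compl` and a commutativity relation `Comm`),
`P` the pure states, `val p a` the probability `p(a)`, `s p` the atomic indicator
proposition of `p`, and `collapse p a` the collapsed state `p_a`. The transition
probability is `(p : q) = val p (s q)`. -/
theorem stmt12 {Lg P : Type*} [Lattice Lg] [BoundedOrder Lg]
    (compl : Lg → Lg) (Comm : Lg → Lg → Prop)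
    (val : P → Lg → ℝ) (s : P → Lg) (collapse : P → Lg → P)
    (p : P) (a b : Lg)
    -- Commutative no-signal hypothesis (CNS), with the common value identified as `p(a)`
    -- (which follows from taking the singleton family `{1}`):
    (hCNS : ∀ (n : ℕ) (bs : Fin n → Lg) (c : Lg),
      (∀ j, Comm c (bs j)) →
      (∀ i j, i ≠ j → bs i ≤ compl (bs j)) →
      Finset.univ.sup bs = ⊤ →
      ∑ j, val p (s (collapse p (bs j))) * val (collapse p (bs j)) c = val p c)
    (hcomm : Comm a b)
    -- the family `{b, b′}` is commuting with `a`, pairwise orthogonal and exhaustive: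
    (hfam2 : (∀ j, Comm a (![b, compl b] j)) ∧
      (∀ i j, i ≠ j → ![b, compl b] i ≤ compl (![b, compl b] j)) ∧
      Finset.univ.sup ![b, compl b] = ⊤)
    -- the family `{b ∧ a, b ∧ a′, b′}` likewise (uses commutativity of `a` and `b`):
    (hfam3 : (∀ j, Comm a (![b ⊓ a, b ⊓ compl a, compl b] j)) ∧
      (∀ i j, i ≠ j →
        ![b ⊓ a, b ⊓ compl a, compl b] i ≤ compl (![b ⊓ a, b ⊓ compl a, compl b] j)) ∧
      Finset.univ.sup ![b ⊓ a, b ⊓ compl a, compl b] = ⊤)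
    (hzero : val (collapse p (b ⊓ compl a)) a = 0)
    (hone : val (collapse p (b ⊓ a)) a = 1) :
    val p (s (collapse p b)) * val (collapse p b) a =
      val p (s (collapse p (b ⊓ a))) :=
  stmt12_general compl Comm val s collapse p a b hCNS hfam2 hfam3 hzero hone
end

section
/- Let H be a two-dimensional complex Hilbert space and W : L(H) → L(ℂ²) a linear map sending positive rank-one operators to positive rank-one operators or zero, with matrix (L_{ij}) of operator entries satisfying L_{ij}* = L_{ji}. Suppose (after the normalizations in the proof) the off-diagonal data satisfy B₁ = B real and nonzero, B₂ = ±iB. Then A = 0, B₃ = 0, βδ = −B², αγ = B², α² = β², γ² = δ², and the operator matrix reduces (after allowed basis changes) to the canonical form (1/2)·[[I + σ₃, σ₁ ± iσ₂],[σ₁ ∓ iσ₂, I − σ₃]], which represents W(ρ) = ρ or W(ρ) = JρJ for the complex-conjugation antilinear involution J. -/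
open scoped ComplexConjugate
open Matrix
open scoped ComplexOrder

/-- The Pauli matrices σ₁, σ₂, σ₃ (indexed 0, 1, 2). -/
noncomputable def pauli : Fin 3 → Matrix (Fin 2) (Fin 2) ℂ
  | 0 => !![0, 1; 1, 0]
  | 1 => !![0, -Complex.I; Complex.I, 0]
  | 2 => !![1, 0; 0, -1]

/-- The canonical forms `(1/2)[[I+σ₃, σ₁ ± iσ₂],[σ₁ ∓ iσ₂, I−σ₃]]` (sign `sgn = ±1`). -/
noncomputable def canon (sgn : ℝ) : Fin 2 → Fin 2 → Matrix (Fin 2) (Fin 2) ℂ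
  | 0, 0 => (1 / 2 : ℂ) • ((1 : Matrix (Fin 2) (Fin 2) ℂ) + pauli 2)
  | 0, 1 => (1 / 2 : ℂ) • (pauli 0 + ((sgn : ℂ) * Complex.I) • pauli 1)
  | 1, 0 => (1 / 2 : ℂ) • (pauli 0 - ((sgn : ℂ) * Complex.I) • pauli 1)
  | 1, 1 => (1 / 2 : ℂ) • ((1 : Matrix (Fin 2) (Fin 2) ℂ) - pauli 2)

set_option maxHeartbeats 1000000 in
lemma stmt14_leaf1 (L : Fin 2 → Fin 2 → Matrix (Fin 2) (Fin 2) ℂ) (u s : ℝ)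
    (hu : u = 1 ∨ u = -1) (hs : s = 1 ∨ s = -1)
    (h00 : L 0 0 = !![1,0;0,0]) (h11 : L 1 1 = !![0,0;0,1])
    (h01 : L 0 1 = !![0,(u:ℂ)*(1+(s:ℂ))/2;(u:ℂ)*(1-(s:ℂ))/2,0])
    (h10 : L 1 0 = !![0,(u:ℂ)*(1-(s:ℂ))/2;(u:ℂ)*(1+(s:ℂ))/2,0]) :
    ∀ i j : Fin 2, (!![1,0;0,(u:ℂ)] : Matrix (Fin 2) (Fin 2) ℂ)ᴴ *
      (∑ k, ∑ l, (((1 : Matrix (Fin 2) (Fin 2) ℂ)) i k *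
        (starRingEnd ℂ) ((1 : Matrix (Fin 2) (Fin 2) ℂ) j l)) • L k l) *
      !![1,0;0,(u:ℂ)] = canon s i j := by
  intro i j
  rcases hu with hu | hu <;> rcases hs with hs | hs <;> subst hu <;> subst hs <;>
    norm_num at h01 h10 <;>
  fin_cases i <;> fin_cases j <;>
    simp only [Fin.sum_univ_two, h00, h01, h10, h11, canon] <;>
    · ext a b
      fin_cases a <;> fin_cases b <;>
        simp [pauli, Matrix.mul_apply, Fin.sum_univ_two, Matrix.one_apply,
          Matrix.conjTranspose_apply] <;> norm_num

set_option maxHeartbeats 1000000 in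
lemma stmt14_leaf2 (L : Fin 2 → Fin 2 → Matrix (Fin 2) (Fin 2) ℂ) (u s : ℝ)
    (hu : u = 1 ∨ u = -1) (hs : s = 1 ∨ s = -1)
    (h00 : L 0 0 = !![0,0;0,1]) (h11 : L 1 1 = !![1,0;0,0])
    (h01 : L 0 1 = !![0,(u:ℂ)*(1-(s:ℂ))/2;(u:ℂ)*(1+(s:ℂ))/2,0])
    (h10 : L 1 0 = !![0,(u:ℂ)*(1+(s:ℂ))/2;(u:ℂ)*(1-(s:ℂ))/2,0]) :
    ∀ i j : Fin 2, (!![1,0;0,(u:ℂ)] : Matrix (Fin 2) (Fin 2) ℂ)ᴴ *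
      (∑ k, ∑ l, ((!![0,1;1,0] : Matrix (Fin 2) (Fin 2) ℂ) i k *
        (starRingEnd ℂ) ((!![(0:ℂ),1;1,0] : Matrix (Fin 2) (Fin 2) ℂ) j l)) • L k l) *
      !![1,0;0,(u:ℂ)] = canon s i j := by
  intro i j
  rcases hu with hu | hu <;> rcases hs with hs | hs <;> subst hu <;> subst hs <;>
    norm_num at h01 h10 <;>
  fin_cases i <;> fin_cases j <;>
    simp only [Fin.sum_univ_two, h00, h01, h10, h11, canon] <;>
    · ext a b
      fin_cases a <;> fin_cases b <;>
        simp [pauli, Matrix.mul_apply, Fin.sum_univ_two, Matrix.one_apply,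
          Matrix.conjTranspose_apply] <;> norm_num

lemma stmt14_Umem (u : ℝ) (hu : u = 1 ∨ u = -1) :
    (!![1,0;0,(u:ℂ)] : Matrix (Fin 2) (Fin 2) ℂ) ∈ Matrix.unitaryGroup (Fin 2) ℂ := by
  rw [Matrix.mem_unitaryGroup_iff]
  rcases hu with h | h <;> subst h <;> ext a b <;> fin_cases a <;> fin_cases b <;>
    simp [Matrix.mul_apply, Fin.sum_univ_two, Matrix.star_apply, Matrix.one_apply] <;> norm_num

lemma stmt14_Vmem :
    (!![0,1;1,0] : Matrix (Fin 2) (Fin 2) ℂ) ∈ Matrix.unitaryGroup (Fin 2) ℂ := by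
  rw [Matrix.mem_unitaryGroup_iff]
  ext a b <;> fin_cases a <;> fin_cases b <;>
    simp [Matrix.mul_apply, Fin.sum_univ_two, Matrix.star_apply, Matrix.one_apply]

set_option maxHeartbeats 1000000 in
theorem stmt14 (α β γ δ : ℝ) (A : ℂ) (B : Fin 3 → ℂ) (Br : ℝ)
    (L : Fin 2 → Fin 2 → Matrix (Fin 2) (Fin 2) ℂ)
    (hL11 : L 0 0 = (α : ℂ) • (1 : Matrix (Fin 2) (Fin 2) ℂ) + (β : ℂ) • pauli 2)
    (hL22 : L 1 1 = (γ : ℂ) • (1 : Matrix (Fin 2) (Fin 2) ℂ) + (δ : ℂ) • pauli 2)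
    (hL12 : L 0 1 = A • (1 : Matrix (Fin 2) (Fin 2) ℂ) + ∑ i, B i • pauli i)
    (hL21 : L 1 0 = (L 0 1)ᴴ)
    (hpos11 : (L 0 0).PosSemidef) (hpos22 : (L 1 1).PosSemidef)
    (hproj : (L 0 0 + L 1 1) * (L 0 0 + L 1 1) = L 0 0 + L 1 1)
    -- the rank-one condition: vanishing of the determinant for every unit vector n̂
    (hdet : ∀ n : Fin 3 → ℝ, (∑ i, n i ^ 2) = 1 →
      (((α + β * n 2) * (γ + δ * n 2) : ℝ) : ℂ) =
        (A + ∑ i, B i * (n i : ℂ)) *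
          ((starRingEnd ℂ) A + ∑ i, (starRingEnd ℂ) (B i) * (n i : ℂ)))
    -- the normalized off-diagonal data: B₁ = B real nonzero, B₂ = ± iB
    (hBr : Br ≠ 0) (hB0 : B 0 = (Br : ℂ))
    (hB1 : B 1 = Complex.I * (Br : ℂ) ∨ B 1 = -(Complex.I * (Br : ℂ))) :
    A = 0 ∧ B 2 = 0 ∧ β * δ = -(Br ^ 2) ∧ α * γ = Br ^ 2 ∧
    α ^ 2 = β ^ 2 ∧ γ ^ 2 = δ ^ 2 ∧
    -- after allowed unitary basis changes in domain and range the matrix of operator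
    -- entries reduces to the canonical form, representing `W(ρ) = ρ` or `W(ρ) = JρJ`:
    ∃ U ∈ Matrix.unitaryGroup (Fin 2) ℂ, ∃ V ∈ Matrix.unitaryGroup (Fin 2) ℂ,
      ∃ sgn : ℝ, (sgn = 1 ∨ sgn = -1) ∧
        ∀ i j : Fin 2,
          Uᴴ * (∑ k, ∑ l, (V i k * (starRingEnd ℂ) (V j l)) • L k l) * U =
            canon sgn i j := by
  obtain ⟨e, he, hε⟩ : ∃ e : ℝ, (e = 1 ∨ e = -1) ∧ B 1 = (e : ℂ) * Complex.I * Br := by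
    rcases hB1 with h | h
    · exact ⟨1, Or.inl rfl, by rw [h]; push_cast; ring⟩
    · exact ⟨-1, Or.inr rfl, by rw [h]; push_cast; ring⟩
  have he2 : (e:ℂ)^2 = 1 := by rcases he with h | h <;> rw [h] <;> norm_num
  have hBrC : (Br : ℂ) ≠ 0 := Complex.ofReal_ne_zero.mpr hBr
  have e1 := hdet ![1,0,0] (by norm_num [Fin.sum_univ_three, Matrix.cons_val_two, Matrix.tail_cons, Matrix.head_cons])
  have e2 := hdet ![-1,0,0] (by norm_num [Fin.sum_univ_three, Matrix.cons_val_two, Matrix.tail_cons, Matrix.head_cons])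
  have e3 := hdet ![0,1,0] (by norm_num [Fin.sum_univ_three, Matrix.cons_val_two, Matrix.tail_cons, Matrix.head_cons])
  have e4 := hdet ![0,-1,0] (by norm_num [Fin.sum_univ_three, Matrix.cons_val_two, Matrix.tail_cons, Matrix.head_cons])
  simp only [Fin.sum_univ_three, Matrix.cons_val_zero, Matrix.cons_val_one, Matrix.head_cons,
    Matrix.cons_val_two, Matrix.tail_cons, hB0, hε, _root_.map_mul, Complex.conj_I,
    Complex.conj_ofReal, Complex.ofReal_one, Complex.ofReal_zero, Complex.ofReal_neg,
    mul_zero, mul_one, zero_mul, add_zero, zero_add, mul_neg, neg_neg] at e1 e2 e3 e4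
  push_cast at e1 e2 e3 e4
  have h1 : A + conj A = 0 := by
    have h : (Br:ℂ) * (A + conj A) = Br * 0 := by linear_combination (e2 - e1) / 2
    exact mul_left_cancel₀ hBrC h
  have h2 : A - conj A = 0 := by
    have hne : ((e:ℂ) * Complex.I * Br) ≠ 0 := by
      have : (e:ℂ) ≠ 0 := by rcases he with h' | h' <;> rw [h'] <;> norm_num
      exact mul_ne_zero (mul_ne_zero this Complex.I_ne_zero) hBrC
    have h : ((e:ℂ) * Complex.I * Br) * (A - conj A) = ((e:ℂ) * Complex.I * Br) * 0 := by
      linear_combination (e3 - e4) / 2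
    exact mul_left_cancel₀ hne h
  have hA : A = 0 := by linear_combination (h1 + h2) / 2
  have hag : α * γ = Br ^ 2 := by
    have h : ((α * γ : ℝ) : ℂ) = ((Br^2 : ℝ) : ℂ) := by
      push_cast; linear_combination e1 + conj A * hA + (Br:ℂ) * h1
    exact_mod_cast h
  -- mixed directions
  set c : ℝ := Real.sqrt 2⁻¹ with hcdef
  have hc2 : c ^ 2 = 2⁻¹ := Real.sq_sqrt (by norm_num)
  have hcne : c ≠ 0 := by
    have : (0:ℝ) < c := Real.sqrt_pos.mpr (by norm_num)
    exact this.ne'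
  have m1 := hdet ![c,0,c] (by rw [Fin.sum_univ_three]; simp [hc2]; norm_num)
  have m2 := hdet ![-c,0,c] (by rw [Fin.sum_univ_three]; simp [hc2]; norm_num)
  have m3 := hdet ![0,c,c] (by rw [Fin.sum_univ_three]; simp [hc2]; norm_num)
  have m4 := hdet ![0,-c,c] (by rw [Fin.sum_univ_three]; simp [hc2]; norm_num)
  have m5 := hdet ![c,0,-c] (by rw [Fin.sum_univ_three]; simp [hc2]; norm_num)
  simp only [Fin.sum_univ_three, Matrix.cons_val_zero, Matrix.cons_val_one, Matrix.head_cons,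
    Matrix.cons_val_two, Matrix.tail_cons, hB0, hε, _root_.map_mul, Complex.conj_I,
    Complex.conj_ofReal, Complex.ofReal_zero, Complex.ofReal_neg,
    mul_zero, mul_one, zero_mul, add_zero, zero_add, mul_neg, neg_neg] at m1 m2 m3 m4 m5
  have hc2C : (c:ℂ)^2 = 2⁻¹ := by rw [← Complex.ofReal_pow, hc2]; norm_num
  have hK1 : B 2 + conj (B 2) = 0 := by
    refine mul_left_cancel₀ hBrC ?_
    push_cast at m1 m2 ⊢
    linear_combination m2 - m1 - 2*(Br:ℂ)*(B 2 + conj (B 2))*hc2C - 2*(Br:ℂ)*(c:ℂ)*h1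
  have hne : ((e:ℂ) * Complex.I * (Br:ℂ)) ≠ 0 := by
    have : (e:ℂ) ≠ 0 := by rcases he with h' | h' <;> rw [h'] <;> norm_num
    exact mul_ne_zero (mul_ne_zero this Complex.I_ne_zero) hBrC
  have hK2 : B 2 - conj (B 2) = 0 := by
    refine mul_left_cancel₀ hne ?_
    push_cast at m3 m4 ⊢
    linear_combination m3 - m4 - 2*(e:ℂ)*Complex.I*(Br:ℂ)*(B 2 - conj (B 2))*hc2C
      - 2*(e:ℂ)*Complex.I*(Br:ℂ)*(c:ℂ)*h2
  have hB2 : B 2 = 0 := by linear_combination (hK1 + hK2)/2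
  simp only [hA, hB2, map_zero, zero_add, add_zero, mul_zero, zero_mul] at m1 m5
  push_cast at m1 m5
  have r1 : (α+β*c)*(γ+δ*c) = Br^2*c^2 := by
    have h : (((α+β*c)*(γ+δ*c) : ℝ) : ℂ) = ((Br^2*c^2 : ℝ) : ℂ) := by
      push_cast; linear_combination m1
    exact_mod_cast h
  have r5 : (α+β*(-c))*(γ+δ*(-c)) = Br^2*c^2 := by
    have h : (((α+β*(-c))*(γ+δ*(-c)) : ℝ) : ℂ) = ((Br^2*c^2 : ℝ) : ℂ) := by
      push_cast; linear_combination m5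
    exact_mod_cast h
  have hado : α*δ + β*γ = 0 := by
    have h : (2*c) * (α*δ + β*γ) = (2*c) * 0 := by linear_combination r1 - r5
    exact mul_left_cancel₀ (by positivity) h
  have hbd : β*δ = -(Br^2) := by
    linear_combination r1 + r5 - (2*β*δ - 2*Br^2)*hc2 - 2*hag
  -- positivity and projector
  have h00m : L 0 0 = !![((α+β:ℝ):ℂ),0;0,((α-β:ℝ):ℂ)] := by
    rw [hL11]; ext a b
    fin_cases a <;> fin_cases b <;>
      simp [pauli, Matrix.one_apply, Complex.ofReal_add, Complex.ofReal_sub] <;> ring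
  have h11m : L 1 1 = !![((γ+δ:ℝ):ℂ),0;0,((γ-δ:ℝ):ℂ)] := by
    rw [hL22]; ext a b
    fin_cases a <;> fin_cases b <;>
      simp [pauli, Matrix.one_apply, Complex.ofReal_add, Complex.ofReal_sub] <;> ring
  have habp : 0 ≤ α + β := by
    have t := hpos11.dotProduct_mulVec_nonneg (Pi.single 0 1)
    rw [h00m] at t
    simp [dotProduct, Matrix.mulVec, Fin.sum_univ_two, Pi.single_apply] at t
    exact_mod_cast t
  have habm : 0 ≤ α - β := by
    have t := hpos11.dotProduct_mulVec_nonneg (Pi.single 1 1)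
    rw [h00m] at t
    simp [dotProduct, Matrix.mulVec, Fin.sum_univ_two, Pi.single_apply] at t
    have : β ≤ α := by exact_mod_cast t
    linarith
  have hgdp : 0 ≤ γ + δ := by
    have t := hpos22.dotProduct_mulVec_nonneg (Pi.single 0 1)
    rw [h11m] at t
    simp [dotProduct, Matrix.mulVec, Fin.sum_univ_two, Pi.single_apply] at t
    exact_mod_cast t
  have hgdm : 0 ≤ γ - δ := by
    have t := hpos22.dotProduct_mulVec_nonneg (Pi.single 1 1)
    rw [h11m] at t
    simp [dotProduct, Matrix.mulVec, Fin.sum_univ_two, Pi.single_apply] at t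
    have : δ ≤ γ := by exact_mod_cast t
    linarith
  have hBr2 : 0 < Br^2 := by positivity
  have hαpos : 0 < α := by nlinarith
  have hγpos : 0 < γ := by nlinarith
  -- projector
  have hMsum : L 0 0 + L 1 1 = !![((α+β+(γ+δ):ℝ):ℂ),0;0,((α-β+(γ-δ):ℝ):ℂ)] := by
    rw [h00m, h11m]; ext a b
    fin_cases a <;> fin_cases b <;> simp <;> push_cast <;> ring
  rw [hMsum] at hproj
  have p0' := congrFun (congrFun hproj 0) 0
  have p1' := congrFun (congrFun hproj 1) 1
  simp [Matrix.mul_apply, Fin.sum_univ_two] at p0' p1'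
  have p0 : (α+β+(γ+δ))*(α+β+(γ+δ)) = α+β+(γ+δ) := by exact_mod_cast p0'
  have p1 : (α-β+(γ-δ))*(α-β+(γ-δ)) = α-β+(γ-δ) := by exact_mod_cast p1'
  -- α² = β², γ² = δ²
  have hb2 : α^2 = β^2 := by
    have h : β^2*γ = α^2*γ := by linear_combination β*hado - α*hbd - α*hag
    exact (mul_right_cancel₀ hγpos.ne' h).symm
  have hd2 : γ^2 = δ^2 := by
    have h : δ^2*α = γ^2*α := by linear_combination δ*hado - γ*hbd - γ*hag
    exact (mul_right_cancel₀ hαpos.ne' h).symm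
  refine ⟨hA, hB2, hbd, hag, hb2, hd2, ?_⟩
  have hβcase : β = α ∨ β = -α := by
    have h : (β - α) * (β + α) = 0 := by linear_combination -hb2
    rcases mul_eq_zero.mp h with h | h
    · left; linarith
    · right; linarith
  rcases hβcase with hβ | hβ
  · -- β = α, δ = -γ
    have hδ : δ = -γ := by
      have h : α * (δ + γ) = α * 0 := by linear_combination hado - γ*hβ
      have := mul_left_cancel₀ hαpos.ne' h
      linarith
    rw [hβ, hδ] at p0 p1
    have hα : α = 1/2 := by
      have h : (2*α)*(2*α - 1) = 0 := by linear_combination p0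
      rcases mul_eq_zero.mp h with h | h
      · linarith
      · linarith
    have hγ : γ = 1/2 := by
      have h : (2*γ)*(2*γ - 1) = 0 := by linear_combination p1
      rcases mul_eq_zero.mp h with h | h
      · linarith
      · linarith
    have hBrv : 2*Br = 1 ∨ 2*Br = -1 := by
      rw [hα, hγ] at hag
      have h : (2*Br - 1) * (2*Br + 1) = 0 := by linear_combination -4*hag
      rcases mul_eq_zero.mp h with h | h
      · left; linarith
      · right; linarith
    have hβv : β = 1/2 := by rw [hβ, hα]
    have hδv : δ = -(1/2) := by rw [hδ, hγ]
    have h00 : L 0 0 = !![1,0;0,0] := by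
      rw [h00m, hα, hβv]; ext a b
      fin_cases a <;> fin_cases b <;> simp <;> norm_num
    have h11 : L 1 1 = !![0,0;0,1] := by
      rw [h11m, hγ, hδv]; ext a b
      fin_cases a <;> fin_cases b <;> simp <;> norm_num
    have h01 : L 0 1 = !![0,((2*Br:ℝ):ℂ)*(1+(e:ℂ))/2;((2*Br:ℝ):ℂ)*(1-(e:ℂ))/2,0] := by
      rw [hL12]; ext a b
      fin_cases a <;> fin_cases b <;>
        simp [Fin.sum_univ_three, hA, hB0, hB2, hε, pauli, Matrix.one_apply,
          Complex.I_sq] <;> push_cast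
      all_goals first
        | ring1
        | linear_combination (-(Br:ℂ)*(e:ℂ)) * Complex.I_sq
        | linear_combination ((Br:ℂ)*(e:ℂ)) * Complex.I_sq
    have h10 : L 1 0 = !![0,((2*Br:ℝ):ℂ)*(1-(e:ℂ))/2;((2*Br:ℝ):ℂ)*(1+(e:ℂ))/2,0] := by
      rw [hL21, h01]; ext a b
      fin_cases a <;> fin_cases b <;>
        simp [Matrix.conjTranspose_apply, _root_.map_mul, _root_.map_div₀, _root_.map_add, _root_.map_sub, _root_.map_one,
          Complex.conj_ofReal]
    exact ⟨!![1,0;0,((2*Br:ℝ):ℂ)], stmt14_Umem _ hBrv, 1,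
      one_mem _, e, he, stmt14_leaf1 L (2*Br) e hBrv he h00 h11 h01 h10⟩
  · -- β = -α, δ = γ
    have hδ : δ = γ := by
      have h : α * (δ - γ) = α * 0 := by linear_combination hado - γ*hβ
      have := mul_left_cancel₀ hαpos.ne' h
      linarith
    rw [hβ, hδ] at p0 p1
    have hα : α = 1/2 := by
      have h : (2*α)*(2*α - 1) = 0 := by linear_combination p1
      rcases mul_eq_zero.mp h with h | h
      · linarith
      · linarith
    have hγ : γ = 1/2 := by
      have h : (2*γ)*(2*γ - 1) = 0 := by linear_combination p0
      rcases mul_eq_zero.mp h with h | h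
      · linarith
      · linarith
    have hBrv : 2*Br = 1 ∨ 2*Br = -1 := by
      rw [hα, hγ] at hag
      have h : (2*Br - 1) * (2*Br + 1) = 0 := by linear_combination -4*hag
      rcases mul_eq_zero.mp h with h | h
      · left; linarith
      · right; linarith
    have hβv : β = -(1/2) := by rw [hβ, hα]
    have hδv : δ = 1/2 := by rw [hδ, hγ]
    have hse : -e = 1 ∨ -e = -1 := by
      rcases he with h | h
      · right; rw [h]
      · left; rw [h]; norm_num
    have h00 : L 0 0 = !![0,0;0,1] := by
      rw [h00m, hα, hβv]; ext a b
      fin_cases a <;> fin_cases b <;> simp <;> norm_num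
    have h11 : L 1 1 = !![1,0;0,0] := by
      rw [h11m, hγ, hδv]; ext a b
      fin_cases a <;> fin_cases b <;> simp <;> norm_num
    have h01 : L 0 1 = !![0,((2*Br:ℝ):ℂ)*(1-((-e:ℝ):ℂ))/2;((2*Br:ℝ):ℂ)*(1+((-e:ℝ):ℂ))/2,0] := by
      rw [hL12]; ext a b
      fin_cases a <;> fin_cases b <;>
        simp [Fin.sum_univ_three, hA, hB0, hB2, hε, pauli, Matrix.one_apply,
          Complex.I_sq] <;> push_cast
      all_goals first
        | ring1
        | linear_combination (-(Br:ℂ)*(e:ℂ)) * Complex.I_sq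
        | linear_combination ((Br:ℂ)*(e:ℂ)) * Complex.I_sq
    have h10 : L 1 0 = !![0,((2*Br:ℝ):ℂ)*(1+((-e:ℝ):ℂ))/2;((2*Br:ℝ):ℂ)*(1-((-e:ℝ):ℂ))/2,0] := by
      rw [hL21, h01]; ext a b
      fin_cases a <;> fin_cases b <;>
        simp [Matrix.conjTranspose_apply, _root_.map_mul, _root_.map_div₀, _root_.map_add, _root_.map_sub, _root_.map_one,
          Complex.conj_ofReal]
    exact ⟨!![1,0;0,((2*Br:ℝ):ℂ)], stmt14_Umem _ hBrv, !![0,1;1,0],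
      stmt14_Vmem, -e, hse, stmt14_leaf2 L (2*Br) (-e) hBrv hse h00 h11 h01 h10⟩
end

section
/- Let H, K be finite-dimensional complex Hilbert spaces, T : H → K, and suppose there is a two-dimensional subspace P⊂H on which T has the degenerate form TPf = θ(f)(f, Df)^{1/2} g with D positive definite on P and g ∈ K, and suppose the full map f ↦ (Tf,·)Tf extends linearly on L(H). If the range of T is not contained in a single ray, a contradiction arises; hence the range of T is contained in a one-dimensional subspace [k], and Tf = θ(f)(f, L₁₁ f)^{1/2} k on all of H for some positive operator L₁₁. -/
open scoped ComplexConjugate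

/-!
Expanding `(f + αh, ·)(f + αh)` and applying `W` shows that the rank-one operators
`(T(f + αh), ·) T(f + αh)` form a pencil `X + |α|² Y + α A + ᾱ B` with `A = W((f, ·) h)` and
`B = W((h, ·) f)`. Suppose `Th ∉ ℂ g` and pick `u ⊥ g` with `(Th, u) ≠ 0`. For `0 ≠ f ∈ P`,
`Tf` is a nonzero multiple of `g`, and the vanishing of the `{g, u}`-minor of every member of
the pencil forces exactly one of `(g, A u)`, `(g, B u)` to vanish. But the first is antilinear
and the second linear in `f`, so on the plane `P` both have nonzero kernels, and some
`0 ≠ f ∈ P` makes both vanish or neither. Hence `Tf = c(f) g` on all of `H`; the Riesz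
representative `L` of the sesquilinear form `(p, q) ↦ (g, W((p, ·) q) g) / ‖g‖⁴` satisfies
`(f, L f) = |c(f)|²`, and `c(f) = e^{i arg c(f)} |c(f)|`.
-/

open scoped InnerProductSpace
open Complex Module

lemma quartic_coeffs_eq_zero_of_forall_real {c₁ c₂ c₃ c₄ : ℂ}
    (h : ∀ t : ℝ, c₁ * t + c₂ * t ^ 2 + c₃ * t ^ 3 + c₄ * t ^ 4 = 0) :
    c₁ = 0 ∧ c₂ = 0 ∧ c₃ = 0 ∧ c₄ = 0 := by
  have h₁ := h 1
  have h₂ := h (-1)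
  have h₃ := h 2
  have h₄ := h (-2)
  push_cast at h₁ h₂ h₃ h₄
  refine ⟨?_, ?_, ?_, ?_⟩
  · linear_combination (2 * (h₁ - h₂) - (h₃ - h₄) / 4) / 3
  · linear_combination (2 * (h₁ + h₂) - (h₃ + h₄) / 8) / 3
  · linear_combination ((h₃ - h₄) / 4 - (h₁ - h₂) / 2) / 3
  · linear_combination ((h₃ + h₄) / 8 - (h₁ + h₂) / 2) / 3

lemma eq_zero_and_mul_conj_eq_of_forall_real {a₁ a₂ b₀ b₁ b₂ c₁ c₂ : ℂ} (hb₀ : b₀ ≠ 0)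
    (h : ∀ t : ℝ, (t * a₁ + t ^ 2 * a₂) * conj (t * a₁ + t ^ 2 * a₂)
      = (b₀ + t * b₁ + t ^ 2 * b₂) * (t * c₁ + t ^ 2 * c₂)) :
    c₁ = 0 ∧ a₁ * conj a₁ = b₀ * c₂ := by
  obtain ⟨h₁, h₂, -, -⟩ := quartic_coeffs_eq_zero_of_forall_real
    (c₁ := b₀ * c₁) (c₂ := b₀ * c₂ + b₁ * c₁ - a₁ * conj a₁)
    (c₃ := b₁ * c₂ + b₂ * c₁ - (a₁ * conj a₂ + a₂ * conj a₁)) (c₄ := b₂ * c₂ - a₂ * conj a₂)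
    fun t => by
      have ht := h t
      simp only [map_add, map_mul, map_pow, conj_ofReal] at ht
      linear_combination -ht
  have hc₁ : c₁ = 0 := (mul_eq_zero.1 h₁).resolve_left hb₀
  exact ⟨hc₁, by linear_combination -h₂ + b₁ * hc₁⟩

-- `α = 1, i, 1 + i` separate the coefficients of `α²`, `ᾱ²` and `|α|²`.
lemma mul_conj_eq_zero_of_forall_mul_conj_eq {a b c : ℂ}
    (h : ∀ α : ℂ, (α * a + conj α * b) * conj (α * a + conj α * b) = c * (conj α * α)) :
    a * conj b = 0 ∧ a * conj a + b * conj b = c := by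
  have h₁ := h 1
  have h₂ := h I
  have h₃ := h (1 + I)
  simp only [map_add, map_mul, map_one, map_neg, conj_I, neg_neg] at h₁ h₂ h₃
  constructor
  · linear_combination (h₁ - h₂) / 4 - (I / 4) * (h₃ - h₁ - h₂)
      + ((3 * a * conj b - b * conj a - (a * conj a + b * conj b - c)) / 4) * I_sq
  · linear_combination (h₁ + h₂) / 2
      + ((a * conj a + b * conj b - c - a * conj b - b * conj a) / 2) * I_sq

-- Replace `α` by `tα` with `t` real and compare the terms of order `t` and `t²`.
lemma mul_conj_eq_zero_of_forall_quadratic {a b k f₀ p q r s s' m : ℂ} (hf₀ : f₀ ≠ 0)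
    (h : ∀ α : ℂ,
      (α * a + conj α * b + conj α * α * k) * conj (α * a + conj α * b + conj α * α * k)
        = (f₀ + α * p + conj α * q + conj α * α * r) * (α * s + conj α * s' + conj α * α * m)) :
    a * conj b = 0 ∧ a * conj a + b * conj b = f₀ * m := by
  refine mul_conj_eq_zero_of_forall_mul_conj_eq fun α => ?_
  have := eq_zero_and_mul_conj_eq_of_forall_real (a₁ := α * a + conj α * b)
    (a₂ := conj α * α * k) (b₁ := α * p + conj α * q) (b₂ := conj α * α * r)
    (c₁ := α * s + conj α * s') (c₂ := conj α * α * m) hf₀ fun t => by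
      have ht := h (t * α)
      simp only [map_add, map_mul, map_pow, conj_ofReal, conj_conj] at ht ⊢
      linear_combination ht
  linear_combination this.2

lemma LinearMap.exists_ne_zero_apply_eq_zero_iff {𝕜 V : Type*} [Field 𝕜] [AddCommGroup V]
    [Module 𝕜 V] (hV : 1 < finrank 𝕜 V) (φ ψ : V →ₗ[𝕜] 𝕜) :
    ∃ v ≠ 0, (φ v = 0 ↔ ψ v = 0) := by
  have : FiniteDimensional 𝕜 V := Module.finite_of_finrank_pos (zero_lt_one.trans hV)
  have hker (χ : V →ₗ[𝕜] 𝕜) : ∃ v ≠ 0, χ v = 0 := by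
    obtain ⟨v, hv, hv0⟩ := (Submodule.ne_bot_iff _).1
      (χ.ker_ne_bot_of_finrank_lt (by rwa [finrank_self]))
    exact ⟨v, hv0, hv⟩
  obtain ⟨v₁, hv₁0, hφv₁⟩ := hker φ
  obtain ⟨v₂, hv₂0, hψv₂⟩ := hker ψ
  by_cases hψv₁ : ψ v₁ = 0
  · exact ⟨v₁, hv₁0, iff_of_true hφv₁ hψv₁⟩
  by_cases hφv₂ : φ v₂ = 0
  · exact ⟨v₂, hv₂0, iff_of_true hφv₂ hψv₂⟩
  refine ⟨v₁ + v₂, fun h => hψv₁ ?_, ?_⟩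
  · rw [eq_neg_of_add_eq_zero_left h, map_neg, hψv₂, neg_zero]
  · simp [hφv₁, hψv₂, hφv₂, hψv₁]

section

variable {H K : Type*} [NormedAddCommGroup H] [InnerProductSpace ℂ H]
  [NormedAddCommGroup K] [InnerProductSpace ℂ K]

lemma rankOne_apply (e x : H) : rankOne e x = ⟪e, x⟫_ℂ • e := rfl

noncomputable def outer : H →ₗ⋆[ℂ] H →ₗ[ℂ] H →ₗ[ℂ] H :=
  LinearMap.smulRightₗ ∘ₛₗ innerₛₗ ℂ

@[simp] lemma outer_apply (e f x : H) : outer e f x = ⟪e, x⟫_ℂ • f := rfl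

lemma outer_self (e : H) : outer e e = rankOne e := rfl

lemma rankOne_add_smul (f h : H) (α : ℂ) :
    rankOne (f + α • h) = rankOne f + (conj α * α) • rankOne h + α • outer f h
      + conj α • outer h f := by
  ext x
  simp only [LinearMap.add_apply, LinearMap.smul_apply, rankOne_apply, outer_apply,
    inner_add_left, inner_smul_left]
  module

noncomputable def matrixCoeff (x y : K) : (K →ₗ[ℂ] K) →ₗ[ℂ] ℂ :=
  innerₛₗ ℂ x ∘ₗ LinearMap.applyₗ y

@[simp] lemma matrixCoeff_apply (x y : K) (M : K →ₗ[ℂ] K) :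
    matrixCoeff x y M = ⟪x, M y⟫_ℂ := rfl

lemma inner_rankOne_mul_conj (x g u : K) :
    ⟪g, rankOne x u⟫_ℂ * conj ⟪g, rankOne x u⟫_ℂ = ⟪g, rankOne x g⟫_ℂ * ⟪u, rankOne x u⟫_ℂ := by
  simp only [rankOne_apply, inner_smul_right, map_mul, inner_conj_symm]
  ring

lemma not_inner_eq_zero_iff_of_forall_eq_rankOne {X Y A B : K →ₗ[ℂ] K} {g u : K}
    (hXu : X u = 0) (hXg : ⟪g, X g⟫_ℂ ≠ 0) (hYu : ⟪u, Y u⟫_ℂ ≠ 0)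
    (hM : ∀ α : ℂ, ∃ x, X + (conj α * α) • Y + α • A + conj α • B = rankOne x) :
    ¬(⟪g, A u⟫_ℂ = 0 ↔ ⟪g, B u⟫_ℂ = 0) := by
  have hpoly : ∀ α : ℂ,
      (α * ⟪g, A u⟫_ℂ + conj α * ⟪g, B u⟫_ℂ + conj α * α * ⟪g, Y u⟫_ℂ)
          * conj (α * ⟪g, A u⟫_ℂ + conj α * ⟪g, B u⟫_ℂ + conj α * α * ⟪g, Y u⟫_ℂ)
        = (⟪g, X g⟫_ℂ + α * ⟪g, A g⟫_ℂ + conj α * ⟪g, B g⟫_ℂ + conj α * α * ⟪g, Y g⟫_ℂ)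
          * (α * ⟪u, A u⟫_ℂ + conj α * ⟪u, B u⟫_ℂ + conj α * α * ⟪u, Y u⟫_ℂ) := by
    intro α
    obtain ⟨x, hx⟩ := hM α
    have := inner_rankOne_mul_conj x g u
    simp only [← hx, LinearMap.add_apply, LinearMap.smul_apply, inner_add_right,
      inner_smul_right, hXu, zero_add] at this
    simp only [map_add, map_mul] at this ⊢
    linear_combination this
  obtain ⟨hab, hsum⟩ := mul_conj_eq_zero_of_forall_quadratic hXg hpoly
  intro hiff
  have hboth : ⟪g, A u⟫_ℂ = 0 ∧ ⟪g, B u⟫_ℂ = 0 := by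
    rcases mul_eq_zero.1 hab with ha | hb
    · exact ⟨ha, hiff.1 ha⟩
    · rw [map_eq_zero] at hb
      exact ⟨hiff.2 hb, hb⟩
  rw [hboth.1, hboth.2] at hsum
  exact mul_ne_zero hXg hYu (by simpa using hsum.symm)

lemma exists_inner_eq_zero_and_inner_ne_zero {g w : K} (hw : ∀ c : ℂ, w ≠ c • g) :
    ∃ u, ⟪g, u⟫_ℂ = 0 ∧ ⟪w, u⟫_ℂ ≠ 0 := by
  have hw' : w ∉ (ℂ ∙ g)ᗮᗮ := by
    rw [Submodule.orthogonal_orthogonal, Submodule.mem_span_singleton]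
    rintro ⟨c, rfl⟩
    exact hw c rfl
  rw [Submodule.mem_orthogonal'] at hw'
  obtain ⟨u, hu, hwu⟩ := not_forall₂.1 hw'
  exact ⟨u, Submodule.mem_orthogonal_singleton_iff_inner_right.1 hu, hwu⟩

theorem exists_smul_eq_of_rankOne_extends {T : H → K}
    {W : (H →ₗ[ℂ] H) →ₗ[ℂ] (K →ₗ[ℂ] K)} (hW : ∀ f, W (rankOne f) = rankOne (T f))
    {P : Submodule ℂ H} (hP : 1 < finrank ℂ P) {g : K} (hg : g ≠ 0)
    (hTP : ∀ f ∈ P, f ≠ 0 → ∃ c : ℂ, c ≠ 0 ∧ T f = c • g) (h : H) : ∃ c : ℂ, T h = c • g := by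
  by_contra! hTh
  obtain ⟨u, hgu, hwu⟩ := exists_inner_eq_zero_and_inner_ne_zero hTh
  have hpencil : ∀ f ∈ P, f ≠ 0 →
      ¬(⟪g, W (outer f h) u⟫_ℂ = 0 ↔ ⟪g, W (outer h f) u⟫_ℂ = 0) := by
    intro f hf hf0
    obtain ⟨c, hc, hTf⟩ := hTP f hf hf0
    refine not_inner_eq_zero_iff_of_forall_eq_rankOne (X := rankOne (T f)) (Y := rankOne (T h))
      ?_ ?_ ?_ fun α => ⟨T (f + α • h), ?_⟩
    · simp [rankOne_apply, hTf, hgu]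
    · simp [rankOne_apply, hTf, hc, hg]
    · simp only [rankOne_apply, inner_smul_right]
      exact mul_ne_zero hwu (by rwa [← inner_conj_symm, map_ne_zero])
    · simp only [← hW, rankOne_add_smul, map_add, map_smul]
  let a : P →ₗ[ℂ] ℂ := (starLinearEquiv ℂ (A := ℂ)).toLinearMap ∘ₛₗ
    ((matrixCoeff g u ∘ₗ W) ∘ₛₗ outer.flip h) ∘ₗ P.subtype
  let b : P →ₗ[ℂ] ℂ := matrixCoeff g u ∘ₗ W ∘ₗ outer h ∘ₗ P.subtype
  obtain ⟨v, hv0, hv⟩ := LinearMap.exists_ne_zero_apply_eq_zero_iff hP a b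
  exact hpencil v v.2 (by simpa using hv0) (by simpa [a, b, inner_eq_zero_symm] using hv)

lemma exists_linearMap_inner_eq [FiniteDimensional ℂ H] (B : H →ₗ⋆[ℂ] H →ₗ[ℂ] ℂ) :
    ∃ L : H →ₗ[ℂ] H, ∀ p q, ⟪L p, q⟫_ℂ = B p q :=
  ⟨(InnerProductSpace.toDual ℂ H).symm.toLinearEquiv.toLinearMap ∘ₛₗ
      (LinearMap.toContinuousLinearMap : (H →ₗ[ℂ] ℂ) ≃ₗ[ℂ] _).toLinearMap ∘ₛₗ B,
    fun _ _ => InnerProductSpace.toDual_symm_apply⟩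

theorem exists_inner_apply_eq_norm_sq_of_rankOne_extends [FiniteDimensional ℂ H] {T : H → K}
    {W : (H →ₗ[ℂ] H) →ₗ[ℂ] (K →ₗ[ℂ] K)} (hW : ∀ f, W (rankOne f) = rankOne (T f))
    {g : K} (hg : g ≠ 0) {c : H → ℂ} (hc : ∀ f, T f = c f • g) :
    ∃ L : H →ₗ[ℂ] H, ∀ f, ⟪f, L f⟫_ℂ = ((‖c f‖ ^ 2 : ℝ) : ℂ) := by
  obtain ⟨L, hL⟩ := exists_linearMap_inner_eq (outer.compr₂ₛₗ (matrixCoeff g g ∘ₗ W))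
  refine ⟨((‖g‖ ^ 4 : ℝ) : ℂ)⁻¹ • L, fun f => ?_⟩
  have hB : ⟪L f, f⟫_ℂ = ((‖c f‖ ^ 2 * ‖g‖ ^ 4 : ℝ) : ℂ) := by
    rw [hL, LinearMap.compr₂ₛₗ_apply, LinearMap.comp_apply, outer_self, hW, matrixCoeff_apply,
      rankOne_apply, hc, inner_smul_left, inner_smul_right, inner_smul_right,
      inner_self_eq_norm_sq_to_K, RCLike.ofReal_eq_complex_ofReal]
    push_cast
    rw [← Complex.conj_mul']
    ring
  have hg' : (‖g‖ : ℂ) ≠ 0 := by simpa using hg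
  rw [LinearMap.smul_apply, inner_smul_right, ← inner_conj_symm, hB, conj_ofReal]
  push_cast
  field_simp

end

theorem stmt15_general {H K : Type*}
    [NormedAddCommGroup H] [InnerProductSpace ℂ H] [FiniteDimensional ℂ H]
    [NormedAddCommGroup K] [InnerProductSpace ℂ K]
    (T : H → K)
    (hext : ∃ W : (H →ₗ[ℂ] H) →ₗ[ℂ] (K →ₗ[ℂ] K),
      ∀ f : H, W (rankOne f) = rankOne (T f))
    (P : Submodule ℂ H) (hP : Module.finrank ℂ P = 2)
    (g : K) (hg : g ≠ 0)
    (θ : H → ℂ) (hθ : ∀ f ∈ P, ‖θ f‖ = 1)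
    (D : H →ₗ[ℂ] H)
    -- `D` positive definite on `P`:
    (hD : ∀ f ∈ P, (inner ℂ f (D f) : ℂ).im = 0 ∧ (f ≠ 0 → 0 < (inner ℂ f (D f) : ℂ).re))
    -- degenerate form on `P`: `Tf = θ(f)(f,Df)^{1/2} g`
    (hdeg : ∀ f ∈ P, T f = θ f • ((Real.sqrt ((inner ℂ f (D f) : ℂ).re) : ℂ) • g)) :
    ∃ k : K, (∀ f : H, ∃ c : ℂ, T f = c • k) ∧
      ∃ (L₁₁ : H →ₗ[ℂ] H) (θ' : H → ℂ), IsPosOp L₁₁ ∧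
        (∀ f : H, ‖θ' f‖ = 1) ∧
        ∀ f : H, T f = θ' f • ((Real.sqrt ((inner ℂ f (L₁₁ f) : ℂ).re) : ℂ) • k) := by
  obtain ⟨W, hW⟩ := hext
  have hTP : ∀ f ∈ P, f ≠ 0 → ∃ c : ℂ, c ≠ 0 ∧ T f = c • g := by
    intro f hf hf0
    refine ⟨θ f * √(⟪f, D f⟫_ℂ).re, mul_ne_zero ?_ ?_, by rw [hdeg f hf, smul_smul]⟩
    · exact norm_ne_zero_iff.1 (by simp [hθ f hf])
    · exact ofReal_ne_zero.2 (Real.sqrt_pos.2 ((hD f hf).2 hf0)).ne'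
  choose c hc using exists_smul_eq_of_rankOne_extends hW (hP ▸ one_lt_two) hg hTP
  obtain ⟨L, hL⟩ := exists_inner_apply_eq_norm_sq_of_rankOne_extends hW hg hc
  refine ⟨g, fun f => ⟨c f, hc f⟩, L, fun f => exp (arg (c f) * I), fun f => ?_,
    fun f => norm_exp_ofReal_mul_I _, fun f => ?_⟩
  · rw [hL f, ofReal_re, ofReal_im]
    exact ⟨sq_nonneg _, rfl⟩
  rw [hc f, hL f, ofReal_re, Real.sqrt_sq (norm_nonneg _), smul_smul, mul_comm,
    norm_mul_exp_arg_mul_I]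

theorem stmt15 {H K : Type*}
    [NormedAddCommGroup H] [InnerProductSpace ℂ H] [FiniteDimensional ℂ H]
    [NormedAddCommGroup K] [InnerProductSpace ℂ K] [FiniteDimensional ℂ K]
    (T : H → K)
    (hext : ∃ W : (H →ₗ[ℂ] H) →ₗ[ℂ] (K →ₗ[ℂ] K),
      ∀ f : H, W (rankOne f) = rankOne (T f))
    (P : Submodule ℂ H) (hP : Module.finrank ℂ P = 2)
    (g : K) (hg : g ≠ 0)
    (θ : H → ℂ) (hθ : ∀ f ∈ P, ‖θ f‖ = 1)
    (D : H →ₗ[ℂ] H)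
    -- `D` positive definite on `P`:
    (hD : ∀ f ∈ P, (inner ℂ f (D f) : ℂ).im = 0 ∧ (f ≠ 0 → 0 < (inner ℂ f (D f) : ℂ).re))
    -- degenerate form on `P`: `Tf = θ(f)(f,Df)^{1/2} g`
    (hdeg : ∀ f ∈ P, T f = θ f • ((Real.sqrt ((inner ℂ f (D f) : ℂ).re) : ℂ) • g)) :
    ∃ k : K, (∀ f : H, ∃ c : ℂ, T f = c • k) ∧
      ∃ (L₁₁ : H →ₗ[ℂ] H) (θ' : H → ℂ), IsPosOp L₁₁ ∧
        (∀ f : H, ‖θ' f‖ = 1) ∧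
        ∀ f : H, T f = θ' f • ((Real.sqrt ((inner ℂ f (L₁₁ f) : ℂ).re) : ℂ) • k) :=
  stmt15_general T hext P hP g hg θ hθ D hD hdeg
end

section
/- Let K be a finite-dimensional complex Hilbert space, K₀ ⊂ K a subspace with orthogonal projector Q₀, and T : H → K a map with Q₀Tf = θ(f)(f, Df)^{1/2} g for some g ∈ K₀, positive definite D, and unimodular θ. If h ⊥ K₀ and Q is the projector onto span{g, h}, then QT cannot be of linear or antilinear type; i.e., there is no linear or antilinear functional φ on H and unimodular θ' with Q_g QTf = θ'(f) φ(f) Q_g k for all f (Q_g the projector on [g]). -/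
/-!
Since `[g]` lies in both `K₀` and `span {g, h}`, `Q_g Q T f = Q_g Q₀ T f = θ(f) (f, Df)^{1/2} g`,
which is nonzero for `f ≠ 0` by positive definiteness of `D`. So `φ` may not vanish off `0`;
but a linear functional, or the conjugate of an antilinear one, on a space of dimension at
least two has a nonzero vector in its kernel.
-/

open scoped ComplexConjugate

open Module Submodule

theorem LinearMap.exists_ne_zero_apply_eq_zero {𝕜 V : Type*} [Field 𝕜] [AddCommGroup V]
    [Module 𝕜 V] [FiniteDimensional 𝕜 V] (ψ : V →ₗ[𝕜] 𝕜) (hV : 2 ≤ finrank 𝕜 V) :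
    ∃ v ≠ 0, ψ v = 0 := by
  have hker : LinearMap.ker ψ ≠ ⊥ := ψ.ker_ne_bot_of_finrank_lt (by rw [finrank_self]; lia)
  obtain ⟨v, hv, hv0⟩ := (Submodule.ne_bot_iff _).1 hker
  exact ⟨v, hv0, hv⟩

theorem exists_ne_zero_apply_eq_zero_of_linear_or_antilinear {V : Type*} [AddCommGroup V]
    [Module ℂ V] [FiniteDimensional ℂ V] (hV : 2 ≤ finrank ℂ V) (φ : V → ℂ)
    (hφ : IsLinearMap ℂ φ ∨
      ((∀ x y : V, φ (x + y) = φ x + φ y) ∧ ∀ (c : ℂ) (x : V), φ (c • x) = conj c * φ x)) :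
    ∃ v ≠ 0, φ v = 0 := by
  rcases hφ with hlin | ⟨hadd, hsmul⟩
  · exact (hlin.mk' φ).exists_ne_zero_apply_eq_zero hV
  · let ψ : V →ₗ[ℂ] ℂ :=
      { toFun := fun x => conj (φ x)
        map_add' := fun x y => by simp only [hadd, map_add]
        map_smul' := fun c x => by simp only [hsmul, map_mul, Complex.conj_conj, smul_eq_mul,
          RingHom.id_apply] }
    obtain ⟨v, hv, hψv⟩ := ψ.exists_ne_zero_apply_eq_zero hV
    exact ⟨v, hv, by simpa [ψ] using hψv⟩

theorem Submodule.starProjection_eq_of_le {𝕜 E : Type*} [RCLike 𝕜] [NormedAddCommGroup E]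
    [InnerProductSpace 𝕜 E] {U V : Submodule 𝕜 E} [U.HasOrthogonalProjection]
    [V.HasOrthogonalProjection] (hUV : U ≤ V) {x y : E} (hx : V.starProjection x = y)
    (hy : y ∈ U) : U.starProjection x = y := by
  rw [← starProjection_comp_starProjection_of_le hUV, ContinuousLinearMap.comp_apply, hx,
    starProjection_eq_self_iff.2 hy]

theorem stmt17_general {H K : Type*}
    [NormedAddCommGroup H] [InnerProductSpace ℂ H] [FiniteDimensional ℂ H]
    [NormedAddCommGroup K] [InnerProductSpace ℂ K] [FiniteDimensional ℂ K]
    (hH : 2 ≤ Module.finrank ℂ H)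
    (K₀ : Submodule ℂ K) (g : K) (hgK₀ : g ∈ K₀) (hg : g ≠ 0)
    (h : K)
    (T : H → K)
    (θ : H → ℂ) (hθ : ∀ f, ‖θ f‖ = 1)
    (D : H →ₗ[ℂ] H)
    -- `D` positive definite:
    (hD : ∀ f : H, (inner ℂ f (D f) : ℂ).im = 0 ∧ (f ≠ 0 → 0 < (inner ℂ f (D f) : ℂ).re))
    -- degenerate form of `Q₀T`:
    (hform : ∀ f : H,
      (K₀.subtypeL.comp (Submodule.orthogonalProjection K₀)) (T f) =
        θ f • ((Real.sqrt ((inner ℂ f (D f) : ℂ).re) : ℂ) • g)) :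
    -- `QT` cannot be of linear or antilinear type, `Q` the projector onto `span{g, h}`,
    -- `Q_g` the projector onto `[g]`:
    ¬ ∃ φ : H → ℂ,
      (IsLinearMap ℂ φ ∨
        ((∀ x y : H, φ (x + y) = φ x + φ y) ∧
          ∀ (c : ℂ) (x : H), φ (c • x) = (starRingEnd ℂ) c * φ x)) ∧
      ∃ θ' : H → ℂ, (∀ f, ‖θ' f‖ = 1) ∧
        ∃ k : K, ∀ f : H,
          ((Submodule.span ℂ {g}).subtypeL.comp
              (Submodule.orthogonalProjection (Submodule.span ℂ {g})))
            (((Submodule.span ℂ ({g, h} : Set K)).subtypeL.comp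
                (Submodule.orthogonalProjection (Submodule.span ℂ ({g, h} : Set K)))) (T f)) =
          (θ' f * φ f) •
            ((Submodule.span ℂ {g}).subtypeL.comp
              (Submodule.orthogonalProjection (Submodule.span ℂ {g}))) k := by
  rintro ⟨φ, hφ, θ', -, k, hk⟩
  obtain ⟨f, hf, hφf⟩ := exists_ne_zero_apply_eq_zero_of_linear_or_antilinear hH φ hφ
  have hQ₀ : (span ℂ {g}).starProjection (T f) = θ f • ((√(inner ℂ f (D f)).re : ℂ) • g) :=
    starProjection_eq_of_le (span_le.2 (Set.singleton_subset_iff.2 hgK₀)) (hform f)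
      (smul_mem _ _ (smul_mem _ _ (mem_span_singleton_self g)))
  have hθf : θ f ≠ 0 := norm_ne_zero_iff.1 (by rw [hθ f]; exact one_ne_zero)
  have hsqrt : (√(inner ℂ f (D f)).re : ℂ) ≠ 0 :=
    Complex.ofReal_ne_zero.2 (Real.sqrt_pos.2 ((hD f).2 hf)).ne'
  have hQ : (span ℂ {g}).starProjection ((span ℂ {g, h}).starProjection (T f)) = 0 := by
    have hkf := hk f
    rwa [hφf, mul_zero, zero_smul] at hkf
  rw [← ContinuousLinearMap.comp_apply, starProjection_comp_starProjection_of_le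
    (span_mono (by simp)), hQ₀] at hQ
  exact smul_ne_zero hθf (smul_ne_zero hsqrt hg) hQ

theorem stmt17 {H K : Type*}
    [NormedAddCommGroup H] [InnerProductSpace ℂ H] [FiniteDimensional ℂ H]
    [NormedAddCommGroup K] [InnerProductSpace ℂ K] [FiniteDimensional ℂ K]
    (hH : 2 ≤ Module.finrank ℂ H)
    (K₀ : Submodule ℂ K) (g : K) (hgK₀ : g ∈ K₀) (hg : g ≠ 0)
    (h : K) (hh : ∀ x ∈ K₀, (inner ℂ h x : ℂ) = 0)
    (T : H → K)
    (θ : H → ℂ) (hθ : ∀ f, ‖θ f‖ = 1)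
    (D : H →ₗ[ℂ] H)
    -- `D` positive definite:
    (hD : ∀ f : H, (inner ℂ f (D f) : ℂ).im = 0 ∧ (f ≠ 0 → 0 < (inner ℂ f (D f) : ℂ).re))
    -- degenerate form of `Q₀T`:
    (hform : ∀ f : H,
      (K₀.subtypeL.comp (Submodule.orthogonalProjection K₀)) (T f) =
        θ f • ((Real.sqrt ((inner ℂ f (D f) : ℂ).re) : ℂ) • g)) :
    -- `QT` cannot be of linear or antilinear type, `Q` the projector onto `span{g, h}`,
    -- `Q_g` the projector onto `[g]`:
    ¬ ∃ φ : H → ℂ,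
      (IsLinearMap ℂ φ ∨
        ((∀ x y : H, φ (x + y) = φ x + φ y) ∧
          ∀ (c : ℂ) (x : H), φ (c • x) = (starRingEnd ℂ) c * φ x)) ∧
      ∃ θ' : H → ℂ, (∀ f, ‖θ' f‖ = 1) ∧
        ∃ k : K, ∀ f : H,
          ((Submodule.span ℂ {g}).subtypeL.comp
              (Submodule.orthogonalProjection (Submodule.span ℂ {g})))
            (((Submodule.span ℂ ({g, h} : Set K)).subtypeL.comp
                (Submodule.orthogonalProjection (Submodule.span ℂ ({g, h} : Set K)))) (T f)) =
          (θ' f * φ f) •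
            ((Submodule.span ℂ {g}).subtypeL.comp
              (Submodule.orthogonalProjection (Submodule.span ℂ {g}))) k :=
  stmt17_general hH K₀ g hgK₀ hg h T θ hθ D hD hform
end
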